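/- arXiv:1811.05727 — 8 statements merged into one kernel-verified Lean document; each statement's English description precedes it below -/
import Mathlib

section
/- Let L₀ ∈ ℕ and M₀ ∈ ℕ, and define recursively L_{n+1} = 2·L_n + 1 and M_{n+1} = 2·(M_n − 1) for n ≥ 0. Set α_n = M_n / (2·L_n + M_n). Then for every real α with 0 < α < 1, if M₀ ≥ ⌈2·(1 + α·L₀)/(1 − α)⌉, then α_n ≥ α for every n ≥ 0. -/
/-- With `L (n+1) = 2 L n + 1`, `M (n+1) = 2 (M n - 1)`, and
`α_n = M_n / (2 L_n + M_n)`, if `M₀ ≥ ⌈2 (1 + α L₀) / (1 − α)⌉` then `α_n ≥ α` for all `n`. -/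
theorem stmt_0 (L M : ℕ → ℕ)
    (hL : ∀ n, L (n + 1) = 2 * L n + 1)
    (hM : ∀ n, M (n + 1) = 2 * (M n - 1))
    (α : ℝ) (hα0 : 0 < α) (hα1 : α < 1)
    (hM0 : ⌈2 * (1 + α * (L 0 : ℝ)) / (1 - α)⌉ ≤ (M 0 : ℤ)) :
    ∀ n, α ≤ (M n : ℝ) / (2 * (L n : ℝ) + (M n : ℝ)) := by
  have h1α : (0:ℝ) < 1 - α := by linarith
  have hM0r : 2 * (1 + α * (L 0 : ℝ)) / (1 - α) ≤ (M 0 : ℝ) := by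
    calc 2 * (1 + α * (L 0 : ℝ)) / (1 - α)
        ≤ ((⌈2 * (1 + α * (L 0 : ℝ)) / (1 - α)⌉ : ℤ) : ℝ) := Int.le_ceil _
      _ ≤ ((M 0 : ℤ) : ℝ) := by exact_mod_cast hM0
      _ = (M 0 : ℝ) := by push_cast; ring
  -- base inequality on M 0
  have hbase : 2 * α * (L 0 : ℝ) + 2 ≤ (1 - α) * (M 0 : ℝ) := by
    have := (div_le_iff₀ h1α).mp hM0r
    nlinarith [this]
  have hL0 : (0:ℝ) ≤ (L 0 : ℝ) := Nat.cast_nonneg _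
  have hM0ge3 : 3 ≤ M 0 := by
    have h2 : (2:ℝ) < (M 0 : ℝ) := by nlinarith
    exact_mod_cast (by exact_mod_cast h2 : (2:ℕ) < M 0)
  -- key invariant
  have key : ∀ n, 3 ≤ M n ∧ 2 * α * (L n : ℝ) + 2 ≤ (1 - α) * (M n : ℝ) := by
    intro n
    induction n with
    | zero => exact ⟨hM0ge3, hbase⟩
    | succ k ih =>
      obtain ⟨h3, hinv⟩ := ih
      have hMk : (M (k+1) : ℝ) = 2 * ((M k : ℝ) - 1) := by
        rw [hM k]
        have : 1 ≤ M k := by omega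
        push_cast [this]
        ring
      constructor
      · rw [hM k]; omega
      · rw [hL k, hMk]
        push_cast
        nlinarith
  intro n
  obtain ⟨h3, hinv⟩ := key n
  have h3r : (3:ℝ) ≤ (M n : ℝ) := by exact_mod_cast h3
  have hLn : (0:ℝ) ≤ (L n : ℝ) := Nat.cast_nonneg _
  have hden : (0:ℝ) < 2 * (L n : ℝ) + (M n : ℝ) := by linarith
  rw [le_div_iff₀ hden]
  nlinarith
end

section
/- Define recursively, for n, i ∈ ℕ, lists b(n,i) of natural numbers of length 2ⁿ by b(0,i) = [i] and b(n+1,i) = b(n, ⌊i/2⌋ + 1) ++ b(n, ⌊i/2⌋) (list concatenation). Then for every n ∈ ℕ and every i ≥ 1: the last entry of b(n,i) equals ⌊i/2ⁿ⌋, the first entry of b(n,i) equals 1 + ⌈(i−1)/2ⁿ⌉, and every entry of b(n,i) lies between these two values, i.e. ⌊i/2ⁿ⌋ ≤ (ℓ-th entry of b(n,i)) ≤ 1 + ⌈(i−1)/2ⁿ⌉ for all 0 ≤ ℓ < 2ⁿ. -/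
def bvec : ℕ → ℕ → List ℕ
  | 0, i => [i]
  | n + 1, i => bvec n (i / 2 + 1) ++ bvec n (i / 2)

/-!
The last entry of `b(n,i)` is reached by halving `i` at every step, the first one by applying
`x ↦ ⌊x/2⌋ + 1` at every step; all other entries come from mixing the two maps. Both maps are
monotone and halving lies below the other one, so every entry lies between the two extreme ones.
The iterates of `x ↦ ⌊x/2⌋ + 1` are ceilings because `⌈(i-1)/2ⁿ⁺¹⌉ = ⌈⌊i/2⌋/2ⁿ⌉`.
-/

theorem List.headD_append_of_ne_nil {α : Type*} {l : List α} (l' : List α) (d : α)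
    (h : l ≠ []) : (l ++ l').headD d = l.headD d := by
  cases l with
  | nil => contradiction
  | cons a t => rfl

theorem List.getLastD_append_of_ne_nil {α : Type*} (l : List α) {l' : List α} (d : α)
    (h : l' ≠ []) : (l ++ l').getLastD d = l'.getLastD d := by
  simp only [List.getLastD_eq_getLast?, List.getLast?_append,
    Option.or_of_isSome (List.getLast?_isSome.mpr h)]

theorem Rat.ceil_intCast_div_two_pow (a : ℤ) (n : ℕ) :
    ⌈(a : ℚ) / 2 ^ n⌉ = -((-a) / 2 ^ n) := by
  exact_mod_cast Rat.ceil_intCast_div_natCast a (2 ^ n)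

theorem ceil_sub_one_div_two_pow_succ (i n : ℕ) :
    ⌈((i : ℚ) - 1) / 2 ^ (n + 1)⌉ = ⌈((i / 2 : ℕ) : ℚ) / 2 ^ n⌉ := by
  rw [show (i : ℚ) - 1 = ((i - 1 : ℤ) : ℚ) by push_cast; rfl, ← Int.cast_natCast (i / 2),
    Rat.ceil_intCast_div_two_pow, Rat.ceil_intCast_div_two_pow, pow_succ', ← Int.ediv_ediv_of_nonneg (by norm_num)]
  congr 2
  omega

theorem length_bvec (n i : ℕ) : (bvec n i).length = 2 ^ n := by
  induction n generalizing i with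
  | zero => rfl
  | succ n ih => simp only [bvec, List.length_append, ih, pow_succ]; ring

theorem bvec_ne_nil (n i : ℕ) : bvec n i ≠ [] :=
  List.ne_nil_of_length_pos (by simp [length_bvec])

theorem getLastD_bvec (n i : ℕ) : (bvec n i).getLastD 0 = i / 2 ^ n := by
  induction n generalizing i with
  | zero => simp [bvec]
  | succ n ih =>
    rw [bvec, List.getLastD_append_of_ne_nil _ _ (bvec_ne_nil _ _), ih, Nat.div_div_eq_div_mul,
      pow_succ']

theorem headD_bvec (n i : ℕ) : ((bvec n i).headD 0 : ℤ) = 1 + ⌈((i : ℚ) - 1) / 2 ^ n⌉ := by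
  induction n generalizing i with
  | zero => simp [bvec]
  | succ n ih =>
    rw [bvec, List.headD_append_of_ne_nil _ _ (bvec_ne_nil _ _), ih, ceil_sub_one_div_two_pow_succ]
    push_cast
    ring_nf

theorem div_two_pow_le_of_mem_bvec {n i x : ℕ} (hx : x ∈ bvec n i) : i / 2 ^ n ≤ x := by
  induction n generalizing i with
  | zero => simp_all [bvec]
  | succ n ih =>
    rw [pow_succ', ← Nat.div_div_eq_div_mul]
    rcases List.mem_append.mp hx with hx | hx
    · exact (Nat.div_le_div_right (Nat.le_succ _)).trans (ih hx)
    · exact ih hx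

theorem le_of_mem_bvec {n i x : ℕ} (hx : x ∈ bvec n i) :
    (x : ℤ) ≤ 1 + ⌈((i : ℚ) - 1) / 2 ^ n⌉ := by
  induction n generalizing i with
  | zero => simp_all [bvec]
  | succ n ih =>
    have hfirst : 1 + ⌈((i : ℚ) - 1) / 2 ^ (n + 1)⌉ =
        1 + ⌈(((i / 2 + 1 : ℕ) : ℚ) - 1) / 2 ^ n⌉ := by
      rw [ceil_sub_one_div_two_pow_succ]; push_cast; ring_nf
    rw [hfirst]
    rcases List.mem_append.mp hx with hx | hx
    · exact ih hx
    · refine (ih hx).trans ?_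
      gcongr
      linarith

theorem stmt_2_general (n i : ℕ) :
    (bvec n i).getLastD 0 = i / 2 ^ n ∧
    ((bvec n i).headD 0 : ℤ) = 1 + ⌈((i : ℚ) - 1) / ((2 : ℚ) ^ n)⌉ ∧
    ∀ ℓ < 2 ^ n,
      i / 2 ^ n ≤ (bvec n i).getD ℓ 0 ∧
      ((bvec n i).getD ℓ 0 : ℤ) ≤ 1 + ⌈((i : ℚ) - 1) / ((2 : ℚ) ^ n)⌉ := by
  refine ⟨getLastD_bvec n i, headD_bvec n i, fun ℓ hℓ => ?_⟩
  have hmem : (bvec n i).getD ℓ 0 ∈ bvec n i := by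
    rw [← length_bvec n i] at hℓ
    rw [List.getD_eq_getElem _ _ hℓ]
    exact List.getElem_mem hℓ
  exact ⟨div_two_pow_le_of_mem_bvec hmem, le_of_mem_bvec hmem⟩

/-- For every `n` and every `i ≥ 1`: the last entry of `b(n,i)` is `⌊i/2ⁿ⌋`,
the first entry is `1 + ⌈(i−1)/2ⁿ⌉`, and every entry lies between these two values. -/
theorem stmt_2 (n i : ℕ) (hi : 1 ≤ i) :
    (bvec n i).getLastD 0 = i / 2 ^ n ∧
    ((bvec n i).headD 0 : ℤ) = 1 + ⌈((i : ℚ) - 1) / ((2 : ℚ) ^ n)⌉ ∧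
    ∀ ℓ < 2 ^ n,
      i / 2 ^ n ≤ (bvec n i).getD ℓ 0 ∧
      ((bvec n i).getD ℓ 0 : ℤ) ≤ 1 + ⌈((i : ℚ) - 1) / ((2 : ℚ) ^ n)⌉ :=
  stmt_2_general n i
end

section
/- Define recursively, for n, i ∈ ℕ, lists b(n,i) of natural numbers of length 2ⁿ by b(0,i) = [i] and b(n+1,i) = b(n, ⌊i/2⌋ + 1) ++ b(n, ⌊i/2⌋) (list concatenation). Then for every n ≥ 1 and every i ≥ 1, the difference between the maximum entry and the minimum entry of b(n,i) is at least 1 and at most 2. -/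
lemma bvec_key (n i : ℕ) : (i + 2 ^ (n + 1) - 2) / 2 ^ (n + 1) = (i / 2 + 2 ^ n - 1) / 2 ^ n := by
  have h1 : 1 ≤ 2 ^ n := Nat.one_le_two_pow
  have h2 : i + 2 ^ (n + 1) - 2 = i + (2 ^ n - 1) * 2 := by
    have : 2 ^ (n + 1) = 2 * 2 ^ n := by ring
    omega
  have h3 : (i + (2 ^ n - 1) * 2) / 2 = i / 2 + (2 ^ n - 1) :=
    Nat.add_mul_div_right i _ (by norm_num)
  have h4 : (i + 2 ^ (n + 1) - 2) / 2 ^ (n + 1) = ((i + 2 ^ (n + 1) - 2) / 2) / 2 ^ n := by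
    rw [Nat.div_div_eq_div_mul, pow_succ, mul_comm]
  rw [h4, h2, h3]
  congr 1
  omega

lemma bvec_mem_lo (n i : ℕ) : i / 2 ^ n ∈ bvec n i := by
  induction n generalizing i with
  | zero => simp [bvec]
  | succ n ih =>
    have : i / 2 ^ (n + 1) = (i / 2) / 2 ^ n := by
      rw [Nat.div_div_eq_div_mul, pow_succ, mul_comm]
    rw [this, bvec]
    exact List.mem_append_right _ (ih (i / 2))

lemma bvec_mem_hi (n i : ℕ) (hn : 1 ≤ n) : (i + 2 ^ n - 2) / 2 ^ n + 1 ∈ bvec n i := by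
  induction n generalizing i with
  | zero => omega
  | succ n ih =>
    rcases Nat.eq_zero_or_pos n with h | h
    · subst h
      simp only [bvec]
      have : (i + 2 ^ (0 + 1) - 2) / 2 ^ (0 + 1) = i / 2 := by
        norm_num
      rw [this]
      exact List.mem_append_left _ (List.mem_singleton.mpr rfl)
    · have h1 : 1 ≤ 2 ^ n := Nat.one_le_two_pow
      have key : (i + 2 ^ (n + 1) - 2) / 2 ^ (n + 1) = (i / 2 + 1 + 2 ^ n - 2) / 2 ^ n := by
        rw [bvec_key]
        congr 1
        omega
      rw [key, bvec]
      exact List.mem_append_left _ (ih (i / 2 + 1) h)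

lemma bvec_bounds (n i : ℕ) : ∀ x ∈ bvec n i,
    i / 2 ^ n ≤ x ∧ x ≤ (i + 2 ^ n - 2) / 2 ^ n + 1 := by
  induction n generalizing i with
  | zero =>
    intro x hx
    simp only [bvec, List.mem_singleton] at hx
    subst hx
    simp only [pow_zero, Nat.div_one]
    omega
  | succ n ih =>
    intro x hx
    have h1 : 1 ≤ 2 ^ n := Nat.one_le_two_pow
    have hlo : i / 2 ^ (n + 1) = (i / 2) / 2 ^ n := by
      rw [Nat.div_div_eq_div_mul, pow_succ, mul_comm]
    have key : (i + 2 ^ (n + 1) - 2) / 2 ^ (n + 1) = (i / 2 + 1 + 2 ^ n - 2) / 2 ^ n := by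
      rw [bvec_key]; congr 1; omega
    rw [bvec, List.mem_append] at hx
    rcases hx with hx | hx
    · obtain ⟨hl, hr⟩ := ih (i / 2 + 1) x hx
      constructor
      · calc i / 2 ^ (n + 1) = (i / 2) / 2 ^ n := hlo
          _ ≤ (i / 2 + 1) / 2 ^ n := Nat.div_le_div_right (by omega)
          _ ≤ x := hl
      · rw [key]; exact hr
    · obtain ⟨hl, hr⟩ := ih (i / 2) x hx
      constructor
      · rw [hlo]; exact hl
      · rw [key]
        calc x ≤ (i / 2 + 2 ^ n - 2) / 2 ^ n + 1 := hr
          _ ≤ (i / 2 + 1 + 2 ^ n - 2) / 2 ^ n + 1 := by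
              exact Nat.add_le_add_right (Nat.div_le_div_right (by omega)) 1

/-- For every `n ≥ 1` and every `i ≥ 1`, the difference between the maximum
entry and the minimum entry of `b(n,i)` is at least `1` and at most `2`. -/
theorem stmt_3 (n i : ℕ) (hn : 1 ≤ n) (hi : 1 ≤ i) :
    ∃ hiVal loVal : ℕ, hiVal ∈ bvec n i ∧ loVal ∈ bvec n i ∧
      (∀ x ∈ bvec n i, loVal ≤ x ∧ x ≤ hiVal) ∧
      1 ≤ hiVal - loVal ∧ hiVal - loVal ≤ 2 := by
  refine ⟨(i + 2 ^ n - 2) / 2 ^ n + 1, i / 2 ^ n, bvec_mem_hi n i hn, bvec_mem_lo n i,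
    bvec_bounds n i, ?_, ?_⟩
  · have h2 : 2 ≤ 2 ^ n := by
      calc 2 = 2 ^ 1 := rfl
        _ ≤ 2 ^ n := Nat.pow_le_pow_right (by norm_num) hn
    have : i / 2 ^ n ≤ (i + 2 ^ n - 2) / 2 ^ n := Nat.div_le_div_right (by omega)
    omega
  · have h2 : 2 ≤ 2 ^ n := by
      calc 2 = 2 ^ 1 := rfl
        _ ≤ 2 ^ n := Nat.pow_le_pow_right (by norm_num) hn
    have h3 : (i + 2 ^ n - 2) / 2 ^ n ≤ (i + 2 ^ n) / 2 ^ n :=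
      Nat.div_le_div_right (by omega)
    have h4 : (i + 2 ^ n) / 2 ^ n = i / 2 ^ n + 1 := by
      rw [Nat.add_div_right _ (by positivity)]
    omega
end

section
/- Let M be a nonzero subrectangular nonnegative real matrix (of size m × n), and let x, y ∈ ℝ^m be nonnegative vectors such that ‖xᵀM‖₁ > 0 and ‖yᵀM‖₁ > 0. Then the support of the row vector xᵀM equals the support of yᵀM. Likewise, for nonnegative vectors x, y ∈ ℝⁿ with ‖Mx‖₁ > 0 and ‖My‖₁ > 0, the support of Mx equals the support of My. (No assumption that x and y have the same support is needed.) -/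
/-- A nonnegative matrix is *subrectangular* if `M i j ≠ 0` and `M k l ≠ 0` imply
`M i l ≠ 0` and `M k j ≠ 0`. -/
def Subrectangular {m n : Type*} (M : Matrix m n ℝ) : Prop :=
  ∀ i j k l, M i j ≠ 0 → M k l ≠ 0 → M i l ≠ 0 ∧ M k j ≠ 0

lemma supp_vecMul_eq {m n : Type*} [Fintype m] [Fintype n]
    (M : Matrix m n ℝ) (hpos : ∀ i j, 0 ≤ M i j)
    (hsr : Subrectangular M) (x : m → ℝ) (hx : ∀ i, 0 ≤ x i)
    (hsum : 0 < ∑ j, |Matrix.vecMul x M j|) :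
    Function.support (Matrix.vecMul x M) = {j | ∃ i, M i j ≠ 0} := by
  have hvm : ∀ j, Matrix.vecMul x M j = ∑ i, x i * M i j := by
    intro j; simp [Matrix.vecMul, dotProduct]
  have key : ∀ j, Matrix.vecMul x M j ≠ 0 ↔ ∃ i, x i * M i j ≠ 0 := by
    intro j
    rw [hvm]
    constructor
    · intro h
      by_contra hc
      push_neg at hc
      exact h (Finset.sum_eq_zero fun i _ => hc i)
    · rintro ⟨i, hi⟩ h
      rw [Finset.sum_eq_zero_iff_of_nonneg (fun i _ => mul_nonneg (hx i) (hpos i j))] at h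
      exact hi (h i (Finset.mem_univ i))
  obtain ⟨j0, -, hj0⟩ := Finset.exists_ne_zero_of_sum_ne_zero hsum.ne'
  have hj0' : Matrix.vecMul x M j0 ≠ 0 := fun h => hj0 (by simp [h])
  obtain ⟨i0, hi0⟩ := (key j0).mp hj0'
  have hxi0 : x i0 ≠ 0 := fun h => hi0 (by simp [h])
  have hMi0 : M i0 j0 ≠ 0 := fun h => hi0 (by simp [h])
  ext j
  simp only [Function.support, Set.mem_setOf_eq, key j]
  constructor
  · rintro ⟨i, hi⟩
    exact ⟨i, fun h => hi (by simp [h])⟩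
  · rintro ⟨k, hk⟩
    have := (hsr i0 j0 k j hMi0 hk).1
    exact ⟨i0, mul_ne_zero hxi0 this⟩

/-- For a nonzero subrectangular nonnegative matrix `M` and nonnegative
vectors `x, y` with `‖xᵀM‖₁ > 0` and `‖yᵀM‖₁ > 0`, `supp(xᵀM) = supp(yᵀM)`; likewise for
`Mx` and `My`. -/
theorem stmt_5 {m n : Type*} [Fintype m] [Fintype n]
    (M : Matrix m n ℝ) (hpos : ∀ i j, 0 ≤ M i j)
    (hsr : Subrectangular M) (hne : M ≠ 0) :
    (∀ x y : m → ℝ, (∀ i, 0 ≤ x i) → (∀ i, 0 ≤ y i) →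
      0 < ∑ j, |Matrix.vecMul x M j| → 0 < ∑ j, |Matrix.vecMul y M j| →
      Function.support (Matrix.vecMul x M) = Function.support (Matrix.vecMul y M)) ∧
    (∀ x y : n → ℝ, (∀ j, 0 ≤ x j) → (∀ j, 0 ≤ y j) →
      0 < ∑ i, |Matrix.mulVec M x i| → 0 < ∑ i, |Matrix.mulVec M y i| →
      Function.support (Matrix.mulVec M x) = Function.support (Matrix.mulVec M y)) := by
  constructor
  · intro x y hx hy hxs hys
    rw [supp_vecMul_eq M hpos hsr x hx hxs, supp_vecMul_eq M hpos hsr y hy hys]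
  · intro x y hx hy hxs hys
    have hposT : ∀ i j, 0 ≤ M.transpose i j := fun i j => hpos j i
    have hsrT : Subrectangular M.transpose := by
      intro i j k l h1 h2
      simp only [Matrix.transpose_apply] at *
      exact ⟨(hsr j i l k h1 h2).2, (hsr j i l k h1 h2).1⟩
    have hmv : Matrix.mulVec M x = Matrix.vecMul x M.transpose := (Matrix.vecMul_transpose M x).symm
    have hmv' : Matrix.mulVec M y = Matrix.vecMul y M.transpose := (Matrix.vecMul_transpose M y).symm
    rw [hmv] at hxs ⊢; rw [hmv'] at hys ⊢
    rw [supp_vecMul_eq M.transpose hposT hsrT x hx hxs, supp_vecMul_eq M.transpose hposT hsrT y hy hys]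
end

section
/- Let M be a subrectangular nonnegative real matrix and let T and T′ be arbitrary nonnegative real matrices of compatible dimensions (not necessarily subrectangular). Then both matrix products T·M and M·T′ are subrectangular. -/
lemma sum_ne_zero_iff_aux {α : Type*} [Fintype α] (f : α → ℝ) (hf : ∀ a, 0 ≤ f a) :
    (∑ a, f a) ≠ 0 ↔ ∃ a, f a ≠ 0 := by
  constructor
  · intro h
    by_contra hc
    push_neg at hc
    exact h (Finset.sum_eq_zero fun a _ => hc a)
  · rintro ⟨a, ha⟩
    have hpos : 0 < f a := lt_of_le_of_ne (hf a) (Ne.symm ha)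
    have : 0 < ∑ b, f b :=
      Finset.sum_pos' (fun b _ => hf b) ⟨a, Finset.mem_univ a, hpos⟩
    exact ne_of_gt this

/-- If `M` is subrectangular nonnegative and `T`, `T'` are arbitrary
nonnegative matrices of compatible dimensions, then `T * M` and `M * T'` are
subrectangular. -/
theorem stmt_6 {k m n p : Type*} [Fintype m] [Fintype n]
    (M : Matrix m n ℝ) (T : Matrix k m ℝ) (T' : Matrix n p ℝ)
    (hM : ∀ i j, 0 ≤ M i j) (hT : ∀ i j, 0 ≤ T i j) (hT' : ∀ i j, 0 ≤ T' i j)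
    (hsr : Subrectangular M) :
    Subrectangular (T * M) ∧ Subrectangular (M * T') := by
  have hTM : ∀ i j, (T * M) i j ≠ 0 ↔ ∃ a, T i a ≠ 0 ∧ M a j ≠ 0 := by
    intro i j
    rw [Matrix.mul_apply, sum_ne_zero_iff_aux _ (fun a => mul_nonneg (hT i a) (hM a j))]
    simp [mul_ne_zero_iff]
  have hMT : ∀ i j, (M * T') i j ≠ 0 ↔ ∃ a, M i a ≠ 0 ∧ T' a j ≠ 0 := by
    intro i j
    rw [Matrix.mul_apply, sum_ne_zero_iff_aux _ (fun a => mul_nonneg (hM i a) (hT' a j))]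
    simp [mul_ne_zero_iff]
  constructor
  · intro i j k' l h1 h2
    obtain ⟨a, ha1, ha2⟩ := (hTM i j).1 h1
    obtain ⟨b, hb1, hb2⟩ := (hTM k' l).1 h2
    have h3 := hsr a j b l ha2 hb2
    exact ⟨(hTM i l).2 ⟨a, ha1, h3.1⟩, (hTM k' j).2 ⟨b, hb1, h3.2⟩⟩
  · intro i j k' l h1 h2
    obtain ⟨a, ha1, ha2⟩ := (hMT i j).1 h1
    obtain ⟨b, hb1, hb2⟩ := (hMT k' l).1 h2
    have h3 := hsr i a k' b ha1 hb1
    exact ⟨(hMT i l).2 ⟨b, h3.1, hb2⟩, (hMT k' j).2 ⟨a, h3.2, ha2⟩⟩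
end

section
/- Let M be a nonzero subrectangular nonnegative real matrix. Then φ(M) = min over i, k ranging over the nonzero rows of M and j, l ranging over the nonzero columns of M of (M i j · M k l)/(M i l · M k j) is strictly positive, and the supremum, over all pairs of strictly positive vectors x, y, of d(xᵀM, yᵀM)/d(x, y) (with the convention 0/0 = 0) equals (1 − √φ(M))/(1 + √φ(M)), which is strictly less than 1. -/
/-- The projective distance `d(x,y) = ln max_{j,l ∈ supp x} (x_j/y_j)/(x_l/y_l)`, with the
convention that `d = 0` when the support is empty (`sSup ∅ = 0` and `log 0 = 0`). -/
noncomputable def projDist {n : Type*} (x y : n → ℝ) : ℝ :=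
  Real.log (sSup {r : ℝ | ∃ j, x j ≠ 0 ∧ ∃ l, x l ≠ 0 ∧ r = (x j / y j) / (x l / y l)})

/-- `φ(M)`: minimum of `(M i j · M k l)/(M i l · M k j)` over nonzero rows `i, k` and
nonzero columns `j, l` of `M`. -/
noncomputable def phi {m n : Type*} (M : Matrix m n ℝ) : ℝ :=
  sInf {r : ℝ | ∃ i k j l,
    (∃ j', M i j' ≠ 0) ∧ (∃ j', M k j' ≠ 0) ∧ (∃ i', M i' j ≠ 0) ∧ (∃ i', M i' l ≠ 0) ∧
    r = (M i j * M k l) / (M i l * M k j)}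

/-!
Write `a = √φ(M)` and `τ = (1 - a) / (1 + a)`. For positive `x, y` and columns `j, l`, the
quotient `((xᵀM)_j / (yᵀM)_j) / ((xᵀM)_l / (yᵀM)_l)` is a ratio of two linear forms in
`u = x / y`, with weights `b = y ⊙ M_j` and `c = y ⊙ M_l` whose cross ratios are at least `a²`
by the definition of `φ`. After clearing denominators the bound `≤ δ^τ`, with
`δ = max u / min u`, is linear in `u`, so it suffices to check it at the vertices of a box, where
it becomes the `2 × 2` inequality `(X + δY)(X + a²Y) ≤ δ^τ (X + δa²Y)(X + Y)`, proved by
monotonicity in `δ`. Hence `d(xᵀM, yᵀM) ≤ τ d(x, y)`. Conversely, for rows `i, k` and columns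
`j, l` attaining `φ`, take `y` concentrated on rows `i, k` and `x = y` except `x_i = δ y_i`: the
ratio of columns `l, j` tends to `(δ + a) / (1 + δa)`, and
`log ((δ + a) / (1 + δa)) / log δ → τ` as `δ → 1`.
-/

open Real Finset Filter Topology
open scoped Matrix

lemma two_point_ineq {a X Y d : ℝ} (ha : 0 < a) (ha1 : a ≤ 1) (hX : 0 ≤ X) (hY : 0 ≤ Y)
    (hXY : 0 < X + Y) (hd : 1 ≤ d) :
    (X + d * Y) * (X + a ^ 2 * Y) ≤
      d ^ ((1 - a) / (1 + a)) * ((X + d * (a ^ 2 * Y)) * (X + Y)) := by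
  set τ := (1 - a) / (1 + a)
  have hpos : ∀ t, 0 < t → 0 < X + t * Y ∧ 0 < X + t * (a ^ 2 * Y) := by
    intro t ht
    rcases hX.eq_or_lt with rfl | hX
    · have : 0 < Y := by linarith
      constructor <;> positivity
    · constructor <;> positivity
  have hlog : ∀ Z t, 0 < X + t * Z →
      HasDerivAt (fun s => log (X + s * Z)) (Z / (X + t * Z)) t := fun Z t hZ =>
    (((hasDerivAt_id t).mul_const Z).const_add X).log hZ.ne' |>.congr_deriv (by simp)
  set h : ℝ → ℝ := fun t => τ * log t - log (X + t * Y) + log (X + t * (a ^ 2 * Y))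
  have hderiv : ∀ t, 0 < t → HasDerivAt h
      (τ * t⁻¹ - Y / (X + t * Y) + a ^ 2 * Y / (X + t * (a ^ 2 * Y))) t := fun t ht =>
    (((hasDerivAt_log ht.ne').const_mul τ).sub (hlog _ t (hpos t ht).1)).add
      (hlog _ t (hpos t ht).2)
  have hmono : MonotoneOn h (Set.Ici 1) := by
    refine monotoneOn_of_hasDerivWithinAt_nonneg (convex_Ici 1)
      (fun t ht => (hderiv t (by simp at ht; linarith)).continuousAt.continuousWithinAt)
      (fun t ht => (hderiv t (by simp at ht; linarith)).hasDerivWithinAt) ?_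
    intro t ht
    simp only [interior_Ici, Set.mem_Ioi] at ht
    obtain ⟨hP, hQ⟩ := hpos t (by linarith)
    -- AM-GM: `(X + tY)(X + a²tY) ≥ (1 + a)² X tY`, and `τ (1 + a)² = 1 - a²`.
    have amgm : (1 - a ^ 2) * (X * (t * Y)) ≤ τ * ((X + t * Y) * (X + t * (a ^ 2 * Y))) := by
      rw [div_mul_eq_mul_div, le_div_iff₀ (by linarith)]
      nlinarith [mul_nonneg (by linarith : (0:ℝ) ≤ 1 - a) (sq_nonneg (X - a * (t * Y))),
        mul_nonneg hX (mul_nonneg (by linarith : (0:ℝ) ≤ t) hY)]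
    have : τ * t⁻¹ - Y / (X + t * Y) + a ^ 2 * Y / (X + t * (a ^ 2 * Y)) =
        (τ * ((X + t * Y) * (X + t * (a ^ 2 * Y))) - (1 - a ^ 2) * (X * (t * Y))) /
          (t * ((X + t * Y) * (X + t * (a ^ 2 * Y)))) := by
      have hQ' : X + t * Y * a ^ 2 ≠ 0 := by linarith
      field_simp
      ring
    rw [this]
    exact div_nonneg (by linarith) (by positivity)
  have key := hmono (Set.mem_Ici.2 le_rfl) (Set.mem_Ici.2 hd) hd
  have hd0 : 0 < d := by linarith
  obtain ⟨p1, p3⟩ := hpos d hd0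
  obtain ⟨-, p2⟩ := hpos 1 one_pos
  simp only [h, log_one, mul_zero, one_mul, zero_sub] at key p2
  rw [← log_le_log_iff (by positivity) (by positivity), log_mul p1.ne' p2.ne',
    log_mul (by positivity) (by positivity), log_mul p3.ne' hXY.ne', log_rpow hd0]
  linarith

lemma two_point_ineq_of_cross {a d P₁ P₂ Q₁ Q₂ : ℝ} (ha : 0 < a) (ha1 : a ≤ 1)
    (hd : 1 ≤ d) (hP₁ : 0 ≤ P₁) (hP₂ : 0 ≤ P₂) (hP : 0 < P₁ + P₂) (hQ : 0 ≤ Q₁ + Q₂)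
    (hcross : a ^ 2 * (P₁ * Q₂) ≤ P₂ * Q₁) :
    (P₂ + d * P₁) * (Q₁ + Q₂) ≤
      d ^ ((1 - a) / (1 + a)) * ((Q₂ + d * Q₁) * (P₁ + P₂)) := by
  set K := d ^ ((1 - a) / (1 + a))
  have hpos : 0 < P₂ + a ^ 2 * P₁ := by
    rcases hP₂.eq_or_lt with rfl | hP₂
    · have : 0 < P₁ := by linarith
      positivity
    · positivity
  have h₁ := two_point_ineq ha ha1 hP₂ hP₁ (by linarith) hd
  have h₂ : (P₂ + d * (a ^ 2 * P₁)) * (Q₁ + Q₂) ≤ (Q₂ + d * Q₁) * (P₂ + a ^ 2 * P₁) := by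
    nlinarith [mul_le_mul_of_nonneg_left hcross (by linarith : (0:ℝ) ≤ d - 1)]
  refine le_of_mul_le_mul_right ?_ hpos
  calc (P₂ + d * P₁) * (Q₁ + Q₂) * (P₂ + a ^ 2 * P₁)
      = (P₂ + d * P₁) * (P₂ + a ^ 2 * P₁) * (Q₁ + Q₂) := by ring
    _ ≤ K * ((P₂ + d * (a ^ 2 * P₁)) * (P₂ + P₁)) * (Q₁ + Q₂) := by gcongr
    _ = K * (P₂ + P₁) * ((P₂ + d * (a ^ 2 * P₁)) * (Q₁ + Q₂)) := by ring
    _ ≤ K * (P₂ + P₁) * ((Q₂ + d * Q₁) * (P₂ + a ^ 2 * P₁)) := by gcongr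
    _ = K * ((Q₂ + d * Q₁) * (P₁ + P₂)) * (P₂ + a ^ 2 * P₁) := by ring

lemma sum_mul_sum_le_rpow_mul {ι : Type*} [Fintype ι] {a d : ℝ} (ha : 0 < a) (ha1 : a ≤ 1)
    (hd : 1 ≤ d) {b c u : ι → ℝ} (hb : ∀ i, 0 ≤ b i) (hc : ∀ i, 0 ≤ c i) (hB : 0 < ∑ i, b i)
    (hcross : ∀ i k, a ^ 2 * (b i * c k) ≤ b k * c i) (hu1 : ∀ i, 1 ≤ u i)
    (hud : ∀ i, u i ≤ d) :
    (∑ i, u i * b i) * ∑ i, c i ≤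
      d ^ ((1 - a) / (1 + a)) * ((∑ i, u i * c i) * ∑ i, b i) := by
  classical
  set K := d ^ ((1 - a) / (1 + a))
  set B := ∑ i, b i
  set C := ∑ i, c i
  set w : ι → ℝ := fun i => b i * C - K * (c i * B)
  have hw : ∀ v : ι → ℝ, ∀ T : Finset ι,
      ∑ i ∈ T, v i * w i = (∑ i ∈ T, v i * b i) * C - K * ((∑ i ∈ T, v i * c i) * B) := by
    intro v T
    simp only [w, mul_sub, sum_sub_distrib, sum_mul, mul_sum]
    congr 1 <;> exact sum_congr rfl fun i _ => by ring
  -- The difference of the two sides is `∑ u i * w i`, linear in `u`, so it is largest at a vertex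
  -- of the box `[1, d]^ι`: `u i = d` where `w i > 0` and `u i = 1` elsewhere.
  set S := univ.filter fun i => 0 < w i
  have hvertex : ∑ i, u i * w i ≤ d * ∑ i ∈ S, w i + ∑ i ∈ Sᶜ, w i := by
    rw [← sum_add_sum_compl S (fun i => u i * w i), mul_sum]
    refine add_le_add (sum_le_sum fun i hi => ?_) (sum_le_sum fun i hi => ?_)
    · exact mul_le_mul_of_nonneg_right (hud i) (mem_filter.1 hi).2.le
    · have : w i ≤ 0 := by simpa [S] using hi
      nlinarith [mul_nonneg (sub_nonneg.2 (hu1 i)) (neg_nonneg.2 this)]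
  have hsplit : ∀ v : ι → ℝ, ∑ i, v i = ∑ i ∈ S, v i + ∑ i ∈ Sᶜ, v i :=
    fun v => (sum_add_sum_compl S v).symm
  have hcrossS :
      a ^ 2 * ((∑ i ∈ S, b i) * ∑ k ∈ Sᶜ, c k) ≤ (∑ k ∈ Sᶜ, b k) * ∑ i ∈ S, c i := by
    rw [sum_mul_sum, mul_sum, sum_mul_sum, sum_comm]
    exact sum_le_sum fun i _ => by rw [mul_sum]; exact sum_le_sum fun k _ => hcross i k
  have hvertex_le := two_point_ineq_of_cross ha ha1 hd (sum_nonneg fun i _ => hb i)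
    (sum_nonneg fun i _ => hb i) (by rwa [← hsplit])
    (by rw [← hsplit]; exact sum_nonneg fun i _ => hc i) hcrossS
  rw [← hsplit, ← hsplit] at hvertex_le
  have hw₁ : ∀ T, ∑ i ∈ T, w i = (∑ i ∈ T, b i) * C - K * ((∑ i ∈ T, c i) * B) := fun T => by
    simpa using hw 1 T
  rw [← sub_nonpos, ← hw]
  calc ∑ i, u i * w i ≤ d * ∑ i ∈ S, w i + ∑ i ∈ Sᶜ, w i := hvertex
    _ = (∑ i ∈ Sᶜ, b i + d * ∑ i ∈ S, b i) * C -
          K * ((∑ i ∈ Sᶜ, c i + d * ∑ i ∈ S, c i) * B) := by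
      rw [hw₁, hw₁]; ring
    _ ≤ 0 := sub_nonpos.2 hvertex_le

section projDist

variable {n : Type*} {x y : n → ℝ}

def projRatios (x y : n → ℝ) : Set ℝ :=
  {r | ∃ j, x j ≠ 0 ∧ ∃ l, x l ≠ 0 ∧ r = (x j / y j) / (x l / y l)}

lemma projDist_eq_log_sSup (x y : n → ℝ) : projDist x y = log (sSup (projRatios x y)) := rfl

variable [Finite n]

lemma bddAbove_projRatios (x y : n → ℝ) : BddAbove (projRatios x y) :=
  ((Set.finite_range fun p : n × n => (x p.1 / y p.1) / (x p.2 / y p.2)).subset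
    (by rintro _ ⟨j, -, l, -, rfl⟩; exact ⟨(j, l), rfl⟩)).bddAbove

lemma one_le_sSup_projRatios {j : n} (hx : x j ≠ 0) (hy : y j ≠ 0) :
    1 ≤ sSup (projRatios x y) :=
  le_csSup (bddAbove_projRatios x y) ⟨j, hx, j, hx, (div_self (div_ne_zero hx hy)).symm⟩

lemma div_le_exp_projDist {j l : n} (hj : x j ≠ 0) (hl : x l ≠ 0) :
    (x j / y j) / (x l / y l) ≤ exp (projDist x y) := by
  rcases le_or_gt ((x j / y j) / (x l / y l)) 0 with h | h
  · exact h.trans (exp_pos _).le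
  have hle := le_csSup (bddAbove_projRatios x y) ⟨j, hj, l, hl, rfl⟩
  rwa [projDist_eq_log_sSup, exp_log (h.trans_le hle)]

lemma projDist_nonneg (hsupp : ∀ j, x j ≠ 0 → y j ≠ 0) : 0 ≤ projDist x y := by
  rcases (projRatios x y).eq_empty_or_nonempty with h | ⟨-, j, hj, -⟩
  · rw [projDist_eq_log_sSup, h, Real.sSup_empty, log_zero]
  · exact log_nonneg (one_le_sSup_projRatios hj (hsupp j hj))

lemma projDist_le_log {K : ℝ} (hsupp : ∀ j, x j ≠ 0 → y j ≠ 0) (hK1 : 1 ≤ K)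
    (hK : ∀ j l, x j ≠ 0 → x l ≠ 0 → (x j / y j) / (x l / y l) ≤ K) :
    projDist x y ≤ log K := by
  rw [projDist_eq_log_sSup]
  rcases (projRatios x y).eq_empty_or_nonempty with h | hne
  · rw [h, Real.sSup_empty, log_zero]
    exact log_nonneg hK1
  · obtain ⟨-, j, hj, -⟩ := id hne
    refine log_le_log (one_pos.trans_le (one_le_sSup_projRatios hj (hsupp j hj))) ?_
    exact csSup_le hne (by rintro _ ⟨j, hj, l, hl, rfl⟩; exact hK j l hj hl)

end projDist

section phi

variable {m n : Type*} {M : Matrix m n ℝ}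

def crossRatios (M : Matrix m n ℝ) : Set ℝ :=
  {r | ∃ i k j l,
    (∃ j', M i j' ≠ 0) ∧ (∃ j', M k j' ≠ 0) ∧ (∃ i', M i' j ≠ 0) ∧ (∃ i', M i' l ≠ 0) ∧
    r = (M i j * M k l) / (M i l * M k j)}

variable [Finite m] [Finite n]

lemma finite_crossRatios (M : Matrix m n ℝ) : (crossRatios M).Finite :=
  (Set.finite_range fun p : (m × m) × (n × n) =>
    (M p.1.1 p.2.1 * M p.1.2 p.2.2) / (M p.1.1 p.2.2 * M p.1.2 p.2.1)).subset
    (by rintro _ ⟨i, k, j, l, -, -, -, -, rfl⟩; exact ⟨((i, k), (j, l)), rfl⟩)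

lemma phi_le_div {i j k l} (hij : M i j ≠ 0) (hkl : M k l ≠ 0) :
    phi M ≤ (M i l * M k j) / (M i j * M k l) :=
  csInf_le (finite_crossRatios M).bddBelow
    ⟨i, k, l, j, ⟨j, hij⟩, ⟨l, hkl⟩, ⟨k, hkl⟩, ⟨i, hij⟩, rfl⟩

lemma phi_le_one (hne : M ≠ 0) : phi M ≤ 1 := by
  obtain ⟨i, j, hij⟩ : ∃ i j, M i j ≠ 0 := by
    by_contra! h
    exact hne (Matrix.ext h)
  simpa [div_self (mul_ne_zero hij hij)] using phi_le_div hij hij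

lemma phi_mul_le (hM : ∀ i j, 0 ≤ M i j) (i j k l) :
    phi M * (M i j * M k l) ≤ M i l * M k j := by
  by_cases h : M i j * M k l = 0
  · simpa [h] using mul_nonneg (hM i l) (hM k j)
  have hpos : 0 < M i j * M k l := (mul_nonneg (hM i j) (hM k l)).lt_of_ne' h
  have := phi_le_div (left_ne_zero_of_mul h) (right_ne_zero_of_mul h)
  rwa [le_div_iff₀ hpos] at this

lemma exists_phi_eq (hM : ∀ i j, 0 ≤ M i j) (hsr : Subrectangular M) (hne : M ≠ 0) :
    ∃ i k j l, 0 < M i j ∧ 0 < M k l ∧ 0 < M i l ∧ 0 < M k j ∧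
      phi M = (M i j * M k l) / (M i l * M k j) := by
  obtain ⟨i, j, hij⟩ : ∃ i j, M i j ≠ 0 := by
    by_contra! h
    exact hne (Matrix.ext h)
  have hmem : 1 ∈ crossRatios M :=
    ⟨i, i, j, j, ⟨j, hij⟩, ⟨j, hij⟩, ⟨i, hij⟩, ⟨i, hij⟩, (div_self (mul_ne_zero hij hij)).symm⟩
  obtain ⟨i, k, j, l, ⟨j', hi⟩, ⟨l', hk⟩, ⟨i', hj⟩, ⟨k', hl⟩, hφ⟩ :=
    Set.Nonempty.csInf_mem ⟨1, hmem⟩ (finite_crossRatios M)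
  have hpos : ∀ {i j}, M i j ≠ 0 → 0 < M i j := fun h => (hM _ _).lt_of_ne' h
  exact ⟨i, k, j, l, hpos (hsr i j' i' j hi hj).1, hpos (hsr k l' k' l hk hl).1,
    hpos (hsr i j' k' l hi hl).1, hpos (hsr k l' i' j hk hj).1, hφ⟩

end phi

section vecMul

variable {m n : Type*} [Fintype m] {M : Matrix m n ℝ} {x : m → ℝ}

lemma vecMul_apply_pos (hM : ∀ i j, 0 ≤ M i j) (hx : ∀ i, 0 < x i) {i j} (hij : M i j ≠ 0) :
    0 < (x ᵥ* M) j :=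
  sum_pos' (fun k _ => mul_nonneg (hx k).le (hM k j))
    ⟨i, mem_univ i, mul_pos (hx i) ((hM i j).lt_of_ne' hij)⟩

lemma exists_ne_zero_of_vecMul_apply_ne_zero {j} (h : (x ᵥ* M) j ≠ 0) : ∃ i, M i j ≠ 0 := by
  by_contra! h'
  exact h (sum_eq_zero fun i _ => by simp [h' i])

lemma vecMul_apply_pos_of_ne_zero (hM : ∀ i j, 0 ≤ M i j) {y : m → ℝ} (hy : ∀ i, 0 < y i) {j}
    (h : (x ᵥ* M) j ≠ 0) : 0 < (y ᵥ* M) j :=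
  vecMul_apply_pos hM hy (exists_ne_zero_of_vecMul_apply_ne_zero h).choose_spec

def contractionRatios (M : Matrix m n ℝ) : Set ℝ :=
  {r | ∃ x y : m → ℝ, (∀ i, 0 < x i) ∧ (∀ i, 0 < y i) ∧
    r = projDist (x ᵥ* M) (y ᵥ* M) / projDist x y}

variable [Finite n] {a : ℝ}

lemma projDist_vecMul_le (hM : ∀ i j, 0 ≤ M i j) (ha : 0 < a) (ha1 : a ≤ 1)
    (hcross : ∀ i j k l, a ^ 2 * (M i j * M k l) ≤ M i l * M k j)
    {y : m → ℝ} (hx : ∀ i, 0 < x i) (hy : ∀ i, 0 < y i) :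
    projDist (x ᵥ* M) (y ᵥ* M) ≤ (1 - a) / (1 + a) * projDist x y := by
  set τ := (1 - a) / (1 + a)
  set d := exp (projDist x y)
  have hd : 1 ≤ d := one_le_exp (projDist_nonneg fun j _ => (hy j).ne')
  rw [show τ * projDist x y = log (d ^ τ) by rw [log_rpow (exp_pos _), log_exp]]
  refine projDist_le_log (fun j hj => (vecMul_apply_pos_of_ne_zero hM hy hj).ne')
    (one_le_rpow hd (div_nonneg (by linarith) (by linarith))) fun j l hj hl => ?_
  obtain ⟨i₀, -⟩ := exists_ne_zero_of_vecMul_apply_ne_zero hj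
  obtain ⟨k, -, hk⟩ := exists_min_image univ (fun i => x i / y i) ⟨i₀, mem_univ _⟩
  set α := x k / y k
  have hα : 0 < α := div_pos (hx k) (hy k)
  have hu1 : ∀ i, 1 ≤ x i / y i / α := fun i => (one_le_div hα).2 (hk i (mem_univ i))
  have hud : ∀ i, x i / y i / α ≤ d := fun i =>
    div_le_exp_projDist (y := y) (hx i).ne' (hx k).ne'
  have hsum : ∀ j, ∑ i, x i / y i / α * (y i * M i j) = (x ᵥ* M) j / α := fun j => by
    rw [Matrix.vecMul_apply_eq_sum, sum_div]
    exact sum_congr rfl fun i _ => by field_simp [(hy i).ne']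
  have key := sum_mul_sum_le_rpow_mul ha ha1 hd (fun i => mul_nonneg (hy i).le (hM i j))
    (fun i => mul_nonneg (hy i).le (hM i l)) (vecMul_apply_pos_of_ne_zero hM hy hj)
    (fun i k => by nlinarith [hcross i j k l, mul_pos (hy i) (hy k)]) hu1 hud
  rw [hsum, hsum, ← Matrix.vecMul_apply_eq_sum, ← Matrix.vecMul_apply_eq_sum] at key
  have hxl := vecMul_apply_pos_of_ne_zero hM hx hl
  have hyl := vecMul_apply_pos_of_ne_zero hM hy hl
  have hyj := vecMul_apply_pos_of_ne_zero hM hy hj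
  rw [div_div_div_eq, div_le_iff₀ (by positivity)]
  field_simp at key
  linarith

end vecMul

lemma tendsto_log_div_nhdsGT_zero {a : ℝ} (ha : 0 < a) :
    Tendsto (fun s => log ((exp s + a) / (1 + exp s * a)) / s) (𝓝[>] 0)
      (𝓝 ((1 - a) / (1 + a))) := by
  set g : ℝ → ℝ := fun s => log (exp s + a) - log (1 + exp s * a)
  have hg : HasDerivAt g ((1 - a) / (1 + a)) 0 := by
    have h₁ := ((hasDerivAt_exp 0).add_const a).log (by positivity)
    have h₂ := (((hasDerivAt_exp 0).mul_const a).const_add 1).log (by positivity)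
    refine (h₁.sub h₂).congr_deriv ?_
    rw [Real.exp_zero, one_mul, sub_div]
  refine hg.tendsto_slope_zero_right.congr fun s => ?_
  simp only [g, zero_add, exp_zero, one_mul, sub_self, sub_zero, smul_eq_mul, Real.exp_zero,
    log_div (by positivity : exp s + a ≠ 0) (by positivity : 1 + exp s * a ≠ 0)]
  ring

section lowerBound

variable {m n : Type*} [Fintype m] {M : Matrix m n ℝ}

lemma projDist_update_one_mul [DecidableEq m] {y : m → ℝ} (hy : ∀ i, 0 < y i) {i₀ k₀ : m}
    (hik : i₀ ≠ k₀) {d : ℝ} (hd : 1 ≤ d) :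
    projDist (Function.update (1 : m → ℝ) i₀ d * y) y = log d := by
  set u : m → ℝ := Function.update (1 : m → ℝ) i₀ d
  have hu : ∀ i, (u * y) i / y i = u i := fun i => mul_div_cancel_right₀ _ (hy i).ne'
  have hu1 : ∀ i, 1 ≤ u i := fun i => by
    rcases eq_or_ne i i₀ with rfl | h <;> simp [u, *]
  have hud : ∀ i, u i ≤ d := fun i => by
    rcases eq_or_ne i i₀ with rfl | h <;> simp [u, *]
  have hpos : ∀ i, (u * y) i ≠ 0 := fun i => (mul_pos (one_pos.trans_le (hu1 i)) (hy i)).ne'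
  refine le_antisymm (projDist_le_log (fun j _ => (hy j).ne') hd fun j l _ _ => ?_) ?_
  · rw [hu, hu]
    exact (div_le_self (one_pos.trans_le (hu1 j)).le (hu1 l)).trans (hud j)
  · rw [log_le_iff_le_exp (by linarith)]
    have := div_le_exp_projDist (y := y) (hpos i₀) (hpos k₀)
    rw [hu, hu] at this
    simpa [u, hik.symm] using this

variable [Finite n]

lemma log_div_le_sSup_mul_log (hM : ∀ i j, 0 ≤ M i j) (hbdd : BddAbove (contractionRatios M))
    {i₀ k₀ : m} {j₀ l₀ : n} (hik : i₀ ≠ k₀) (hil : 0 < M i₀ l₀) (hkj : 0 < M k₀ j₀)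
    (hkl : 0 < M k₀ l₀) {a : ℝ} (ha : 0 < a)
    (hφ : M i₀ j₀ * M k₀ l₀ = a ^ 2 * (M i₀ l₀ * M k₀ j₀)) {d : ℝ} (hd : 1 < d) :
    log ((d + a) / (1 + d * a)) ≤ sSup (contractionRatios M) * log d := by
  classical
  set u := Function.update (1 : m → ℝ) i₀ d
  -- The test pairs are `(u * y ε, y ε)`. The weights `M k₀ l₀` and `a * M i₀ l₀` of `y 0` make
  -- the column ratio at `ε = 0` equal to `(d + a) / (1 + d a)`.
  set y : ℝ → m → ℝ := fun ε => Pi.single i₀ (M k₀ l₀) + Pi.single k₀ (a * M i₀ l₀) + ε • 1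
  have hxy : ∀ ε,
      u * y ε = Pi.single i₀ (d * M k₀ l₀) + Pi.single k₀ (a * M i₀ l₀) + ε • u := by
    intro ε
    ext i
    rcases eq_or_ne i i₀ with rfl | h
    · simp [u, y, hik]; ring
    · simp [u, y, h, Pi.single_apply]
  have hvec : ∀ (p q ε : ℝ) (v : m → ℝ) (j : n),
      ((Pi.single i₀ p + Pi.single k₀ q + ε • v) ᵥ* M) j =
        p * M i₀ j + q * M k₀ j + ε * (v ᵥ* M) j :=
    fun p q ε v j => by simp [Matrix.add_vecMul, Matrix.smul_vecMul]
  set F : ℝ → ℝ := fun ε =>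
    ((d * M k₀ l₀ * M i₀ l₀ + a * M i₀ l₀ * M k₀ l₀ + ε * (u ᵥ* M) l₀) /
      (M k₀ l₀ * M i₀ l₀ + a * M i₀ l₀ * M k₀ l₀ + ε * (1 ᵥ* M) l₀)) /
    ((d * M k₀ l₀ * M i₀ j₀ + a * M i₀ l₀ * M k₀ j₀ + ε * (u ᵥ* M) j₀) /
      (M k₀ l₀ * M i₀ j₀ + a * M i₀ l₀ * M k₀ j₀ + ε * (1 ᵥ* M) j₀))
  have hF : ∀ ε > 0, F ε ≤ exp (sSup (contractionRatios M) * log d) := by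
    intro ε hε
    have hy : ∀ i, 0 < y ε i := fun i => by
      simp only [y, Pi.add_apply, Pi.single_apply, Pi.smul_apply, Pi.one_apply, smul_eq_mul,
        mul_one]
      split_ifs <;> positivity
    have hx : ∀ i, 0 < (u * y ε) i := fun i => by
      refine mul_pos ?_ (hy i)
      simp only [u, Function.update_apply, Pi.one_apply]
      split_ifs <;> linarith
    have hdist := projDist_update_one_mul hy hik hd.le
    have hmem : projDist ((u * y ε) ᵥ* M) (y ε ᵥ* M) / log d ∈ contractionRatios M :=
      ⟨_, _, hx, hy, by rw [hdist]⟩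
    have h1 := le_csSup hbdd hmem
    rw [div_le_iff₀ (log_pos hd)] at h1
    have h2 := div_le_exp_projDist (y := y ε ᵥ* M) (vecMul_apply_pos hM hx hil.ne').ne'
      (vecMul_apply_pos hM hx hkj.ne').ne'
    have hxM : ∀ j, ((u * y ε) ᵥ* M) j =
        d * M k₀ l₀ * M i₀ j + a * M i₀ l₀ * M k₀ j + ε * (u ᵥ* M) j := fun j => by
      rw [hxy, hvec]
    rw [hxM l₀, hxM j₀, hvec, hvec] at h2
    exact h2.trans (exp_le_exp.2 h1)
  have hij := hM i₀ j₀
  have hd0 : 0 < d := by linarith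
  have hcont : ContinuousAt F 0 := by
    fun_prop (disch := simp only [zero_mul, add_zero]; positivity)
  have hF0 : F 0 = (d + a) / (1 + d * a) := by
    simp only [F, zero_mul, add_zero]
    rw [div_div_div_eq, div_eq_div_iff (by positivity) (by positivity)]
    linear_combination (M i₀ l₀ * M k₀ l₀ * (d + a) * (1 - d)) * hφ
  have hlim := le_of_tendsto (hcont.tendsto.mono_left nhdsWithin_le_nhds)
    (eventually_nhdsWithin_of_forall (s := Set.Ioi 0) hF)
  rwa [hF0, ← log_le_iff_le_exp (by positivity)] at hlim

lemma le_sSup_contractionRatios (hM : ∀ i j, 0 ≤ M i j) (hbdd : BddAbove (contractionRatios M))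
    {i₀ k₀ : m} {j₀ l₀ : n} (hik : i₀ ≠ k₀) (hil : 0 < M i₀ l₀) (hkj : 0 < M k₀ j₀)
    (hkl : 0 < M k₀ l₀) {a : ℝ} (ha : 0 < a)
    (hφ : M i₀ j₀ * M k₀ l₀ = a ^ 2 * (M i₀ l₀ * M k₀ j₀)) :
    (1 - a) / (1 + a) ≤ sSup (contractionRatios M) :=
  le_of_tendsto (tendsto_log_div_nhdsGT_zero ha) <|
    eventually_nhdsWithin_of_forall fun s hs => by
    have := log_div_le_sSup_mul_log hM hbdd hik hil hkj hkl ha hφ (one_lt_exp_iff.2 hs)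
    rwa [log_exp, ← div_le_iff₀ hs] at this

end lowerBound

/-- For a nonzero subrectangular nonnegative matrix `M`, `φ(M) > 0` and the
Birkhoff contraction coefficient `sup_{x,y>0} d(xᵀM, yᵀM)/d(x,y)` equals
`(1 − √φ(M))/(1 + √φ(M)) < 1` (division by zero is zero, so the convention `0/0 = 0`
is automatic). -/
theorem stmt_7 {m n : Type*} [Fintype m] [Fintype n]
    (M : Matrix m n ℝ) (hpos : ∀ i j, 0 ≤ M i j)
    (hsr : Subrectangular M) (hne : M ≠ 0) :
    0 < phi M ∧
    sSup {r : ℝ | ∃ x y : m → ℝ, (∀ i, 0 < x i) ∧ (∀ i, 0 < y i) ∧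
        r = projDist (Matrix.vecMul x M) (Matrix.vecMul y M) / projDist x y} =
      (1 - Real.sqrt (phi M)) / (1 + Real.sqrt (phi M)) ∧
    (1 - Real.sqrt (phi M)) / (1 + Real.sqrt (phi M)) < 1 := by
  obtain ⟨i₀, k₀, j₀, l₀, hij, hkl, hil, hkj, hφ⟩ := exists_phi_eq hpos hsr hne
  have hφ_pos : 0 < phi M := hφ ▸ by positivity
  set a := √(phi M)
  have ha : 0 < a := sqrt_pos.2 hφ_pos
  have ha1 : a ≤ 1 := sqrt_le_one.2 (phi_le_one hne)
  have ha2 : a ^ 2 = phi M := sq_sqrt hφ_pos.le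
  have hτ : 0 ≤ (1 - a) / (1 + a) := div_nonneg (by linarith) (by linarith)
  have hle : ∀ r ∈ contractionRatios M, r ≤ (1 - a) / (1 + a) := by
    rintro _ ⟨x, y, hx, hy, rfl⟩
    exact div_le_of_le_mul₀ (projDist_nonneg fun j _ => (hy j).ne') hτ
      (projDist_vecMul_le hpos ha ha1 (ha2 ▸ phi_mul_le hpos) hx hy)
  refine ⟨hφ_pos, le_antisymm (Real.sSup_le hle hτ) ?_,
    (div_lt_one (by linarith)).2 (by linarith)⟩
  rcases ha1.lt_or_eq with ha1 | ha1
  · have hik : i₀ ≠ k₀ := by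
      rintro rfl
      rw [mul_comm (M i₀ l₀), div_self (by positivity)] at hφ
      simp [a, hφ] at ha1
    exact le_sSup_contractionRatios hpos ⟨_, hle⟩ hik hil hkj hkl ha
      (by rw [ha2, hφ, div_mul_cancel₀ _ (by positivity)])
  · rw [ha1, sub_self, zero_div]
    refine Real.sSup_nonneg fun r ⟨x, y, hx, hy, hr⟩ => hr ▸ div_nonneg ?_ ?_
    · exact projDist_nonneg fun j hj => (vecMul_apply_pos_of_ne_zero hpos hy hj).ne'
    · exact projDist_nonneg fun j _ => (hy j).ne'
end

section
/- Let M be a nonzero subrectangular nonnegative real matrix, and let x, y be nonnegative vectors with supp(x) = supp(y). Then d(xᵀM, yᵀM) ≤ τ(M) · d(x, y), where τ(M) = (1 − √φ(M))/(1 + √φ(M)). -/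
/-- The Birkhoff contraction coefficient `τ(M) = (1 − √φ(M))/(1 + √φ(M))`. -/
noncomputable def tau {m n : Type*} (M : Matrix m n ℝ) : ℝ :=
  (1 - Real.sqrt (phi M)) / (1 + Real.sqrt (phi M))

open Real in
lemma star_ineq (p β T : ℝ) (hp0 : 0 ≤ p) (hp1 : p ≤ 1) (hppos : 0 < p * p)
    (hβ0 : 0 ≤ β) (hβ1 : β ≤ 1) (hT : 1 ≤ T) :
    p*p + (T - p*p)*β ≤
      Real.exp ((1 - p)/(1 + p) * Real.log T) * ((1 + (T-1)*β) * (p*p + (1-p*p)*β)) := by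
  set φ := p * p with hφ
  have hφ1 : φ ≤ 1 := by nlinarith
  set τ : ℝ := (1 - p)/(1 + p) with hτ
  have hτ0 : 0 ≤ τ := div_nonneg (by linarith) (by linarith)
  set g : ℝ → ℝ := fun s => τ * Real.log s + Real.log (1 + (s-1)*β)
      + Real.log (φ + (1-φ)*β) - Real.log (φ + (s-φ)*β) with hg
  have hd1 : ∀ s : ℝ, 1 ≤ s → 0 < 1 + (s-1)*β := by intro s hs; nlinarith
  have hd2 : ∀ s : ℝ, 1 ≤ s → 0 < φ + (s-φ)*β := by intro s hs; nlinarith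
  have hder : ∀ s : ℝ, 1 ≤ s →
      HasDerivAt g (τ * s⁻¹ + β / (1 + (s-1)*β) + 0 - β / (φ + (s-φ)*β)) s := by
    intro s hs
    have h1 : HasDerivAt (fun s : ℝ => τ * Real.log s) (τ * s⁻¹) s :=
      (Real.hasDerivAt_log (by linarith)).const_mul τ
    have hu : HasDerivAt (fun s : ℝ => 1 + (s-1)*β) β s := by
      have := ((hasDerivAt_id s).sub_const 1).mul_const β
      simpa using this.const_add 1
    have h2 : HasDerivAt (fun s : ℝ => Real.log (1 + (s-1)*β)) (β / (1 + (s-1)*β)) s :=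
      hu.log (hd1 s hs).ne'
    have h3 : HasDerivAt (fun _ : ℝ => Real.log (φ + (1-φ)*β)) 0 s := hasDerivAt_const _ _
    have hv : HasDerivAt (fun s : ℝ => φ + (s-φ)*β) β s := by
      have := ((hasDerivAt_id s).sub_const φ).mul_const β
      simpa using this.const_add φ
    have h4 : HasDerivAt (fun s : ℝ => Real.log (φ + (s-φ)*β)) (β / (φ + (s-φ)*β)) s :=
      hv.log (hd2 s hs).ne'
    exact ((h1.add h2).add h3).sub h4
  have hmono : MonotoneOn g (Set.Ici (1:ℝ)) := by
    apply monotoneOn_of_deriv_nonneg (convex_Ici 1)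
    · exact fun s hs => ((hder s hs).continuousAt).continuousWithinAt
    · intro s hs
      rw [interior_Ici] at hs
      exact ((hder s (le_of_lt hs)).differentiableAt).differentiableWithinAt
    · intro s hs
      rw [interior_Ici] at hs
      have hs1 : 1 ≤ s := le_of_lt hs
      rw [(hder s hs1).deriv]
      have hD1 := hd1 s hs1
      have hD2 := hd2 s hs1
      have hs0 : (0:ℝ) < s := by linarith
      have key : β / (φ + (s-φ)*β) - β / (1 + (s-1)*β) ≤ τ * s⁻¹ := by
        have e1 : β / (φ + (s-φ)*β) - β / (1 + (s-1)*β)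
            = (β*(1-φ)*(1-β)) / ((φ + (s-φ)*β) * (1 + (s-1)*β)) := by
          rw [div_sub_div _ _ hD2.ne' hD1.ne']
          congr 1
          ring
        have e2 : τ * s⁻¹ = (1 - p) / ((1+p) * s) := by
          rw [hτ]; field_simp
        rw [e1, e2, div_le_div_iff₀ (by positivity) (by positivity)]
        have hgoal : β*(1-(p*p))*(1-β)*((1+p)*s) ≤ (1-p)*(((p*p)+(s-(p*p))*β)*(1+(s-1)*β)) := by
          nlinarith [mul_nonneg (sub_nonneg.2 hp1) (sq_nonneg (β*s - p*(1-β)))]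
        exact hgoal
      linarith
  have hg1 : g 1 = 0 := by
    simp [hg]
  have hgT : 0 ≤ g T := by
    have := hmono (Set.self_mem_Ici) (by exact hT) hT
    rw [hg1] at this; exact this
  have hc3 : 0 < φ + (1-φ)*β := by nlinarith
  have hDT1 := hd1 T hT
  have hDT2 := hd2 T hT
  have hlog : Real.log (φ + (T-φ)*β) ≤ τ * Real.log T + Real.log (1 + (T-1)*β)
      + Real.log (φ + (1-φ)*β) := by
    have h : g T = τ * Real.log T + Real.log (1 + (T-1)*β)
        + Real.log (φ + (1-φ)*β) - Real.log (φ + (T-φ)*β) := rfl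
    rw [h] at hgT
    linarith
  calc φ + (T-φ)*β = Real.exp (Real.log (φ + (T-φ)*β)) := (Real.exp_log hDT2).symm
    _ ≤ Real.exp (τ * Real.log T + Real.log (1 + (T-1)*β) + Real.log (φ + (1-φ)*β)) :=
        Real.exp_le_exp.2 hlog
    _ = Real.exp (τ * Real.log T) * ((1 + (T-1)*β) * (φ + (1-φ)*β)) := by
        rw [Real.exp_add, Real.exp_add, Real.exp_log hDT1, Real.exp_log hc3, mul_assoc]

lemma core_ineq (φ T A B Sa Sb : ℝ) (hφ0 : 0 < φ) (hφ1 : φ ≤ 1) (hT : 1 ≤ T)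
    (hA : 0 < A) (hB : 0 < B) (hSb0 : 0 ≤ Sb) (hSbB : Sb ≤ B)
    (hcon : φ * Sa * (B - Sb) ≤ (A - Sa) * Sb) :
    (A + (T-1)*Sa) * B ≤
      Real.exp ((1 - Real.sqrt φ)/(1 + Real.sqrt φ) * Real.log T) * (A * (B + (T-1)*Sb)) := by
  set p := Real.sqrt φ with hp
  have hp0 : 0 ≤ p := Real.sqrt_nonneg _
  have hp1 : p ≤ 1 := by
    rw [hp, show (1:ℝ) = Real.sqrt 1 by simp]
    exact Real.sqrt_le_sqrt hφ1
  have hpp : p * p = φ := Real.mul_self_sqrt hφ0.le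
  set E := Real.exp ((1 - p)/(1 + p) * Real.log T) with hE
  have hβ0 : 0 ≤ Sb / B := div_nonneg hSb0 hB.le
  have hβ1 : Sb / B ≤ 1 := (div_le_one hB).2 hSbB
  have hstar := star_ineq p (Sb/B) T hp0 hp1 (by rw [hpp]; exact hφ0) hβ0 hβ1 hT
  rw [hpp] at hstar
  have hstar2 : (φ * B + (T-φ)*Sb) * B ≤ E * ((B + (T-1)*Sb) * (φ*B + (1-φ)*Sb)) := by
    have h2 := mul_le_mul_of_nonneg_right hstar (le_of_lt (by positivity : (0:ℝ) < B^2))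
    have e1 : (1 + (T-1)*(Sb/B)) * B = B + (T-1)*Sb := by field_simp
    have e2 : (φ + (1-φ)*(Sb/B)) * B = φ*B + (1-φ)*Sb := by field_simp
    have e0 : (φ + (T-φ)*(Sb/B)) * B = φ*B + (T-φ)*Sb := by field_simp
    calc (φ * B + (T-φ)*Sb) * B = ((φ + (T - φ)*(Sb/B)) * B) * B := by rw [e0]
      _ = (φ + (T - φ)*(Sb/B)) * B^2 := by ring
      _ ≤ (E * ((1 + (T-1)*(Sb/B)) * (φ + (1-φ)*(Sb/B)))) * B^2 := h2
      _ = E * (((1 + (T-1)*(Sb/B)) * B) * ((φ + (1-φ)*(Sb/B)) * B)) := by ring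
      _ = E * ((B + (T-1)*Sb) * (φ*B + (1-φ)*Sb)) := by rw [e1, e2]
  have hstep1 : (A + (T-1)*Sa) * (φ*B + (1-φ)*Sb) ≤ A * (φ*B + (T-φ)*Sb) := by
    nlinarith [mul_nonneg (by linarith : (0:ℝ) ≤ T - 1) (by linarith : 0 ≤ (A - Sa)*Sb - φ*Sa*(B-Sb))]
  have hden : 0 < φ*B + (1-φ)*Sb := by nlinarith
  have hchain : ((A + (T-1)*Sa) * B) * (φ*B + (1-φ)*Sb)
      ≤ (E * (A * (B + (T-1)*Sb))) * (φ*B + (1-φ)*Sb) := by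
    calc ((A + (T-1)*Sa) * B) * (φ*B + (1-φ)*Sb)
        = ((A + (T-1)*Sa) * (φ*B + (1-φ)*Sb)) * B := by ring
      _ ≤ (A * (φ*B + (T-φ)*Sb)) * B := mul_le_mul_of_nonneg_right hstep1 hB.le
      _ = A * ((φ*B + (T-φ)*Sb) * B) := by ring
      _ ≤ A * (E * ((B + (T-1)*Sb) * (φ*B + (1-φ)*Sb))) :=
          mul_le_mul_of_nonneg_left hstar2 hA.le
      _ = (E * (A * (B + (T-1)*Sb))) * (φ*B + (1-φ)*Sb) := by ring
  exact le_of_mul_le_mul_right hchain hden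


/-- For a nonzero subrectangular nonnegative matrix `M` and nonnegative
vectors `x, y` with equal supports, `d(xᵀM, yᵀM) ≤ τ(M) · d(x, y)`. -/
theorem stmt_8 {m n : Type*} [Fintype m] [Fintype n]
    (M : Matrix m n ℝ) (hpos : ∀ i j, 0 ≤ M i j)
    (hsr : Subrectangular M) (hne : M ≠ 0)
    (x y : m → ℝ) (hx : ∀ i, 0 ≤ x i) (hy : ∀ i, 0 ≤ y i)
    (hsupp : Function.support x = Function.support y) :
    projDist (Matrix.vecMul x M) (Matrix.vecMul y M) ≤ tau M * projDist x y := by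
  classical
  have hiff : ∀ i, x i ≠ 0 ↔ y i ≠ 0 := fun i => Set.ext_iff.1 hsupp i
  have hv : ∀ (z : m → ℝ) (j : n), Matrix.vecMul z M j = ∑ i, z i * M i j := by
    intro z j; simp [Matrix.vecMul, dotProduct]
  -- basic phi facts
  obtain ⟨i0, j0, hM0⟩ : ∃ i j, M i j ≠ 0 := by
    by_contra h; push_neg at h
    exact hne (by ext i j; exact h i j)
  have hposE : ∀ i j, (∃ j', M i j' ≠ 0) → (∃ i', M i' j ≠ 0) → 0 < M i j := by
    rintro i j ⟨j', hj'⟩ ⟨i', hi'⟩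
    exact lt_of_le_of_ne (hpos i j) (Ne.symm (hsr i j' i' j hj' hi').1)
  set Φ : Set ℝ := {r : ℝ | ∃ i k j l,
    (∃ j', M i j' ≠ 0) ∧ (∃ j', M k j' ≠ 0) ∧ (∃ i', M i' j ≠ 0) ∧ (∃ i', M i' l ≠ 0) ∧
    r = (M i j * M k l) / (M i l * M k j)} with hΦdef
  have hphi : phi M = sInf Φ := rfl
  have hΦfin : Φ.Finite := by
    apply (Set.finite_range (fun q : (m × m) × (n × n) =>
      (M q.1.1 q.2.1 * M q.1.2 q.2.2) / (M q.1.1 q.2.2 * M q.1.2 q.2.1))).subset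
    rintro r ⟨i, k, j, l, -, -, -, -, rfl⟩
    exact ⟨((i,k),(j,l)), rfl⟩
  have hone : (1:ℝ) ∈ Φ := ⟨i0, i0, j0, j0, ⟨j0, hM0⟩, ⟨j0, hM0⟩, ⟨i0, hM0⟩, ⟨i0, hM0⟩,
    (div_self (mul_ne_zero hM0 hM0)).symm⟩
  have hΦne : Φ.Nonempty := ⟨1, hone⟩
  have hφpos : 0 < phi M := by
    rw [hphi]
    obtain ⟨i, k, j, l, h1, h2, h3, h4, heq⟩ := hΦne.csInf_mem hΦfin
    rw [heq]
    exact div_pos (mul_pos (hposE i j h1 h3) (hposE k l h2 h4))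
                  (mul_pos (hposE i l h1 h4) (hposE k j h2 h3))
  have hφ1 : phi M ≤ 1 := by rw [hphi]; exact csInf_le (hΦfin.bddBelow) hone
  have hφle : ∀ i k j l, (∃ j', M i j' ≠ 0) → (∃ j', M k j' ≠ 0) →
      (∃ i', M i' j ≠ 0) → (∃ i', M i' l ≠ 0) →
      phi M * (M i l * M k j) ≤ M i j * M k l := by
    intro i k j l h1 h2 h3 h4
    have hmem : (M i j * M k l) / (M i l * M k j) ∈ Φ := ⟨i, k, j, l, h1, h2, h3, h4, rfl⟩
    have := csInf_le hΦfin.bddBelow hmem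
    rw [hphi] at *
    exact (le_div_iff₀ (mul_pos (hposE i l h1 h4) (hposE k j h2 h3))).1 this
  have hτ0 : 0 ≤ tau M := by
    unfold tau
    apply div_nonneg
    · have : Real.sqrt (phi M) ≤ 1 := by
        rw [show (1:ℝ) = Real.sqrt 1 by simp]
        exact Real.sqrt_le_sqrt hφ1
      linarith
    · positivity
  -- projDist x y ≥ 0
  set S1 : Set ℝ := {r : ℝ | ∃ j, x j ≠ 0 ∧ ∃ l, x l ≠ 0 ∧ r = (x j / y j) / (x l / y l)}
    with hS1def
  have hpd1 : projDist x y = Real.log (sSup S1) := rfl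
  have hS1fin : S1.Finite := by
    apply (Set.finite_range (fun q : m × m => (x q.1 / y q.1) / (x q.2 / y q.2))).subset
    rintro r ⟨j, -, l, -, rfl⟩
    exact ⟨(j, l), rfl⟩
  have hD0 : 0 ≤ projDist x y := by
    by_cases hex : ∃ j, x j ≠ 0
    · obtain ⟨j, hj⟩ := hex
      have hyj : y j ≠ 0 := (hiff j).1 hj
      have h1 : (1:ℝ) ∈ S1 := ⟨j, hj, j, hj, (div_self (div_ne_zero hj hyj)).symm⟩
      rw [hpd1]
      exact Real.log_nonneg (le_csSup hS1fin.bddAbove h1)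
    · push_neg at hex
      have hS1e : S1 = ∅ := by
        ext r; simp [hS1def, hex]
      rw [hpd1, hS1e]
      simp
  by_cases hF : ∃ i, x i ≠ 0 ∧ ∃ j, M i j ≠ 0
  swap
  · -- degenerate case: x M = 0 = y M
    push_neg at hF
    have hxM : Matrix.vecMul x M = 0 := by
      funext j
      rw [hv]
      apply Finset.sum_eq_zero
      intro i _
      by_cases hxi : x i = 0
      · simp [hxi]
      · rw [hF i hxi j, mul_zero]
    have hyM : Matrix.vecMul y M = 0 := by
      funext j
      rw [hv]
      apply Finset.sum_eq_zero
      intro i _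
      by_cases hyi : y i = 0
      · simp [hyi]
      · rw [hF i ((hiff i).2 hyi) j, mul_zero]
    rw [hxM, hyM]
    have h0 : projDist (0 : n → ℝ) 0 = 0 := by
      unfold projDist
      simp
    rw [h0]
    exact mul_nonneg hτ0 hD0
  · obtain ⟨iF, hxiF, jF, hMiF⟩ := hF
    set F : Finset m := Finset.univ.filter (fun i => x i ≠ 0 ∧ ∃ j, M i j ≠ 0) with hFdef
    have hFmem : ∀ i, i ∈ F ↔ (x i ≠ 0 ∧ ∃ j, M i j ≠ 0) := by
      intro i; simp [hFdef]
    have hFne : F.Nonempty := ⟨iF, (hFmem iF).2 ⟨hxiF, jF, hMiF⟩⟩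
    set t : m → ℝ := fun i => x i / y i with htdef
    have hyFpos : ∀ i ∈ F, 0 < y i := by
      intro i hi
      have := ((hFmem i).1 hi).1
      exact lt_of_le_of_ne (hy i) (Ne.symm ((hiff i).1 this))
    have hxFpos : ∀ i ∈ F, 0 < x i := by
      intro i hi
      exact lt_of_le_of_ne (hx i) (Ne.symm ((hFmem i).1 hi).1)
    have htFpos : ∀ i ∈ F, 0 < t i := fun i hi => div_pos (hxFpos i hi) (hyFpos i hi)
    set m0 : ℝ := F.inf' hFne t with hm0def
    set M0 : ℝ := F.sup' hFne t with hM0def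
    have hm0pos : 0 < m0 := (Finset.lt_inf'_iff hFne).2 htFpos
    have hm0M0 : m0 ≤ M0 :=
      le_trans (Finset.inf'_le t hFne.choose_spec) (Finset.le_sup' t hFne.choose_spec)
    set T : ℝ := M0 / m0 with hTdef
    have hT1 : (1:ℝ) ≤ T := (one_le_div hm0pos).2 hm0M0
    have hTpos : 0 < T := lt_of_lt_of_le one_pos hT1
    -- log T ≤ projDist x y
    obtain ⟨ip, hip, hMp⟩ := Finset.exists_mem_eq_sup' hFne t
    obtain ⟨iq, hiq, hMq⟩ := Finset.exists_mem_eq_inf' hFne t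
    have hTS1 : T ∈ S1 := by
      refine ⟨ip, ((hFmem ip).1 hip).1, iq, ((hFmem iq).1 hiq).1, ?_⟩
      rw [hTdef, hM0def, hm0def, hMp, hMq]
    have hlogT : Real.log T ≤ projDist x y := by
      rw [hpd1]
      exact Real.log_le_log hTpos (le_csSup hS1fin.bddAbove hTS1)
    -- not-in-F vanishing
    have hnotF : ∀ i, i ∉ F → (y i = 0 ∨ ∀ j', M i j' = 0) := by
      intro i hi
      rw [hFmem i] at hi
      push_neg at hi
      by_cases hxi : x i = 0
      · left
        by_contra hyi
        exact (hiff i).2 hyi hxi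
      · right
        exact hi hxi
    have hyM0 : ∀ i, i ∉ F → ∀ c, y i * M i c = 0 := by
      intro i hi c
      rcases hnotF i hi with h | h
      · rw [h, zero_mul]
      · rw [h c, mul_zero]
    -- theta
    set θ : m → ℝ := fun i => (t i - m0) / (M0 - m0) with hθdef
    have hθ0 : ∀ i ∈ F, 0 ≤ θ i := by
      intro i hi
      exact div_nonneg (sub_nonneg.2 (Finset.inf'_le t hi)) (sub_nonneg.2 hm0M0)
    have hθ1 : ∀ i ∈ F, θ i ≤ 1 := by
      intro i hi
      by_cases hdeg : M0 - m0 = 0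
      · simp [hθdef, hdeg]
      · rw [hθdef]
        exact (div_le_one (lt_of_le_of_ne (sub_nonneg.2 hm0M0) (Ne.symm hdeg))).2
          (sub_le_sub_right (Finset.le_sup' t hi) m0)
    have ht_eq : ∀ i ∈ F, t i = m0 * (1 + (T - 1) * θ i) := by
      intro i hi
      by_cases hdeg : M0 - m0 = 0
      · have h1 : t i = m0 := le_antisymm
          (by rw [show m0 = M0 by linarith]; exact Finset.le_sup' t hi)
          (Finset.inf'_le t hi)
        simp [hθdef, h1, hdeg]
      · rw [hθdef, hTdef]
        field_simp
        ring
    -- per-column sums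
    have hxa : ∀ (c : n) (i : m),
        x i * M i c = m0 * ((y i * M i c) + (T - 1) * ((y i * M i c) * θ i)) := by
      intro c i
      by_cases hiF : i ∈ F
      · have hyi : y i ≠ 0 := (hyFpos i hiF).ne'
        have h1 : x i * M i c = (y i * M i c) * t i := by
          rw [htdef]
          field_simp
        rw [h1, ht_eq i hiF]
        ring
      · rw [hyM0 i hiF c]
        have hx0 : x i * M i c = 0 := by
          rcases hnotF i hiF with h | h
          · have : x i = 0 := by
              by_contra hxi
              exact ((hiff i).1 hxi) h
            rw [this, zero_mul]
          · rw [h c, mul_zero]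
        rw [hx0]
        ring
    have hxcol : ∀ c : n, Matrix.vecMul x M c
        = m0 * ((∑ i, y i * M i c) + (T - 1) * (∑ i, (y i * M i c) * θ i)) := by
      intro c
      rw [hv]
      calc ∑ i, x i * M i c
          = ∑ i, m0 * ((y i * M i c) + (T - 1) * ((y i * M i c) * θ i)) :=
            Finset.sum_congr rfl fun i _ => hxa c i
        _ = m0 * ((∑ i, y i * M i c) + (T - 1) * (∑ i, (y i * M i c) * θ i)) := by
            rw [← Finset.mul_sum]
            congr 1
            rw [Finset.sum_add_distrib, ← Finset.mul_sum]
    have hycol : ∀ c : n, Matrix.vecMul y M c = ∑ i, y i * M i c := fun c => hv y c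
    have hApos : ∀ c : n, (∃ i', M i' c ≠ 0) → 0 < ∑ i, y i * M i c := by
      intro c hc
      apply Finset.sum_pos'
      · exact fun i _ => mul_nonneg (hy i) (hpos i c)
      · exact ⟨iF, Finset.mem_univ iF,
          mul_pos (hyFpos iF ((hFmem iF).2 ⟨hxiF, jF, hMiF⟩))
            (hposE iF c ⟨jF, hMiF⟩ hc)⟩
    have hAzero : ∀ c : n, ¬(∃ i', M i' c ≠ 0) → Matrix.vecMul x M c = 0 := by
      intro c hc
      push_neg at hc
      rw [hv]
      exact Finset.sum_eq_zero fun i _ => by rw [hc i, mul_zero]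
    have hSnn : ∀ c : n, 0 ≤ ∑ i, (y i * M i c) * θ i := by
      intro c
      apply Finset.sum_nonneg
      intro i _
      by_cases hiF : i ∈ F
      · exact mul_nonneg (mul_nonneg (hy i) (hpos i c)) (hθ0 i hiF)
      · rw [hyM0 i hiF c, zero_mul]
    have hSle : ∀ c : n, ∑ i, (y i * M i c) * θ i ≤ ∑ i, y i * M i c := by
      intro c
      apply Finset.sum_le_sum
      intro i _
      by_cases hiF : i ∈ F
      · exact mul_le_of_le_one_right (mul_nonneg (hy i) (hpos i c)) (hθ1 i hiF)
      · rw [hyM0 i hiF c, zero_mul]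
    -- the cross constraint
    have hcon : ∀ c d : n, (∃ i', M i' c ≠ 0) → (∃ i', M i' d ≠ 0) →
        phi M * (∑ i, (y i * M i c) * θ i)
          * ((∑ i, y i * M i d) - ∑ i, (y i * M i d) * θ i)
        ≤ ((∑ i, y i * M i c) - ∑ i, (y i * M i c) * θ i) * (∑ i, (y i * M i d) * θ i) := by
      intro c d hc hd
      have hsubd : (∑ i, y i * M i d) - (∑ i, (y i * M i d) * θ i)
          = ∑ k, (y k * M k d) * (1 - θ k) := by
        rw [← Finset.sum_sub_distrib]
        exact Finset.sum_congr rfl fun k _ => by ring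
      have hsubc : (∑ i, y i * M i c) - (∑ i, (y i * M i c) * θ i)
          = ∑ k, (y k * M k c) * (1 - θ k) := by
        rw [← Finset.sum_sub_distrib]
        exact Finset.sum_congr rfl fun k _ => by ring
      have hkey : ∀ i k : m,
          phi M * (((y i * M i c) * θ i) * ((y k * M k d) * (1 - θ k)))
          ≤ ((y k * M k c) * (1 - θ k)) * ((y i * M i d) * θ i) := by
        intro i k
        by_cases hiF : i ∈ F
        · by_cases hkF : k ∈ F
          · have hbase := hφle i k c d ((hFmem i).1 hiF).2 ((hFmem k).1 hkF).2 hc hd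
            have hnn : 0 ≤ θ i * (1 - θ k) * (y i * y k) :=
              mul_nonneg (mul_nonneg (hθ0 i hiF) (by linarith [hθ1 k hkF]))
                (mul_nonneg (hy i) (hy k))
            calc phi M * (((y i * M i c) * θ i) * ((y k * M k d) * (1 - θ k)))
                = (θ i * (1 - θ k) * (y i * y k)) * (phi M * (M i c * M k d)) := by ring
              _ ≤ (θ i * (1 - θ k) * (y i * y k)) * (M i d * M k c) := by
                  apply mul_le_mul_of_nonneg_left _ hnn
                  have := hφle i k d c ((hFmem i).1 hiF).2 ((hFmem k).1 hkF).2 hd hc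
                  linarith [this]
              _ = ((y k * M k c) * (1 - θ k)) * ((y i * M i d) * θ i) := by ring
          · rw [hyM0 k hkF d, hyM0 k hkF c]
            simp
        · rw [hyM0 i hiF c, hyM0 i hiF d]
          simp
      calc phi M * (∑ i, (y i * M i c) * θ i)
            * ((∑ i, y i * M i d) - ∑ i, (y i * M i d) * θ i)
          = phi M * ((∑ i, (y i * M i c) * θ i) * (∑ k, (y k * M k d) * (1 - θ k))) := by
            rw [hsubd]; ring
        _ = ∑ i, ∑ k, phi M * (((y i * M i c) * θ i) * ((y k * M k d) * (1 - θ k))) := by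
            rw [Finset.sum_mul_sum]
            simp only [Finset.mul_sum]
        _ ≤ ∑ i, ∑ k, ((y k * M k c) * (1 - θ k)) * ((y i * M i d) * θ i) :=
            Finset.sum_le_sum fun i _ => Finset.sum_le_sum fun k _ => hkey i k
        _ = ∑ k, ∑ i, ((y k * M k c) * (1 - θ k)) * ((y i * M i d) * θ i) :=
            Finset.sum_comm
        _ = (∑ k, (y k * M k c) * (1 - θ k)) * (∑ i, (y i * M i d) * θ i) :=
            (Finset.sum_mul_sum _ _ _ _).symm
        _ = ((∑ i, y i * M i c) - ∑ i, (y i * M i c) * θ i) * (∑ i, (y i * M i d) * θ i) := by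
            rw [hsubc]
    -- main per-pair bound
    set E0 : ℝ := Real.exp (tau M * Real.log T) with hE0def
    have hkeyS2 : ∀ j l : n, Matrix.vecMul x M j ≠ 0 → Matrix.vecMul x M l ≠ 0 →
        (Matrix.vecMul x M j / Matrix.vecMul y M j)
          / (Matrix.vecMul x M l / Matrix.vecMul y M l) ≤ E0 := by
      intro j l hj hl
      have hcj : ∃ i', M i' j ≠ 0 := by
        by_contra hcj; exact hj (hAzero j hcj)
      have hcl : ∃ i', M i' l ≠ 0 := by
        by_contra hcl; exact hl (hAzero l hcl)
      rw [hxcol j, hxcol l, hycol j, hycol l]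
      set A : ℝ := ∑ i, y i * M i j with hAdef
      set B : ℝ := ∑ i, y i * M i l with hBdef
      set Sa : ℝ := ∑ i, (y i * M i j) * θ i with hSadef
      set Sb : ℝ := ∑ i, (y i * M i l) * θ i with hSbdef
      have hA : 0 < A := hApos j hcj
      have hB : 0 < B := hApos l hcl
      have hSb0 : 0 ≤ Sb := hSnn l
      have hSa0 : 0 ≤ Sa := hSnn j
      have hmain := core_ineq (phi M) T A B Sa Sb hφpos hφ1 hT1 hA hB hSb0 (hSle l)
        (hcon j l hcj hcl)
      have htau : tau M = (1 - Real.sqrt (phi M)) / (1 + Real.sqrt (phi M)) := rfl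
      rw [← htau, ← hE0def] at hmain
      have hBT : 0 < B + (T - 1) * Sb := by nlinarith
      have e3 : (m0 * (A + (T - 1) * Sa) / A) / (m0 * (B + (T - 1) * Sb) / B)
          = ((A + (T - 1) * Sa) * B) / (A * (B + (T - 1) * Sb)) := by
        field_simp
      rw [e3, div_le_iff₀ (by positivity)]
      calc (A + (T - 1) * Sa) * B ≤ E0 * (A * (B + (T - 1) * Sb)) := hmain
        _ = E0 * (A * (B + (T - 1) * Sb)) := rfl
    -- wrap-up
    have hxpos : ∀ c : n, (∃ i', M i' c ≠ 0) → 0 < Matrix.vecMul x M c := by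
      intro c hc
      rw [hxcol c]
      have h1 := hApos c hc
      have h2 := hSnn c
      have h3 : 0 ≤ (T - 1) * (∑ i, (y i * M i c) * θ i) :=
        mul_nonneg (by linarith) h2
      nlinarith
    set S2 : Set ℝ := {r : ℝ | ∃ j, Matrix.vecMul x M j ≠ 0 ∧ ∃ l, Matrix.vecMul x M l ≠ 0 ∧
      r = (Matrix.vecMul x M j / Matrix.vecMul y M j)
        / (Matrix.vecMul x M l / Matrix.vecMul y M l)} with hS2def
    have hpd2 : projDist (Matrix.vecMul x M) (Matrix.vecMul y M) = Real.log (sSup S2) := rfl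
    have hS2fin : S2.Finite := by
      apply (Set.finite_range (fun q : n × n =>
        (Matrix.vecMul x M q.1 / Matrix.vecMul y M q.1)
          / (Matrix.vecMul x M q.2 / Matrix.vecMul y M q.2))).subset
      rintro r ⟨j, -, l, -, rfl⟩
      exact ⟨(j, l), rfl⟩
    have hxjF : Matrix.vecMul x M jF ≠ 0 := (hxpos jF ⟨iF, hMiF⟩).ne'
    have hyjF : Matrix.vecMul y M jF ≠ 0 := by
      rw [hycol]
      exact (hApos jF ⟨iF, hMiF⟩).ne'
    have h1S2 : (1:ℝ) ∈ S2 :=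
      ⟨jF, hxjF, jF, hxjF, (div_self (div_ne_zero hxjF hyjF)).symm⟩
    have hsup1 : (1:ℝ) ≤ sSup S2 := le_csSup hS2fin.bddAbove h1S2
    have hsup_le : sSup S2 ≤ E0 := by
      apply csSup_le ⟨1, h1S2⟩
      rintro r ⟨j, hj, l, hl, rfl⟩
      exact hkeyS2 j l hj hl
    rw [hpd2]
    calc Real.log (sSup S2) ≤ Real.log E0 := Real.log_le_log (by linarith) hsup_le
      _ = tau M * Real.log T := by rw [hE0def, Real.log_exp]
      _ ≤ tau M * projDist x y := mul_le_mul_of_nonneg_left hlogT hτ0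
end

section
/- Let M be a nonzero subrectangular nonnegative real matrix and T an arbitrary nonnegative real matrix of compatible dimensions. Then for any two nonnegative vectors x and y such that ‖xᵀ·T·M‖₁ > 0 and ‖yᵀ·T·M‖₁ > 0, one has d(xᵀ·T·M, yᵀ·T·M) ≤ 4·ln((1 + τ(M))/(1 − τ(M))), where τ(M) = (1 − √φ(M))/(1 + √φ(M)). -/
/-- Let `M` be nonzero subrectangular nonnegative and `T` an arbitrary
nonnegative matrix. For nonnegative vectors `x, y` with `‖xᵀTM‖₁ > 0` and `‖yᵀTM‖₁ > 0`,
`d(xᵀTM, yᵀTM) ≤ 4·ln((1 + τ(M))/(1 − τ(M)))`. -/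
theorem stmt_10 {k m n : Type*} [Fintype k] [Fintype m] [Fintype n]
    (M : Matrix m n ℝ) (T : Matrix k m ℝ)
    (hMpos : ∀ i j, 0 ≤ M i j) (hTpos : ∀ i j, 0 ≤ T i j)
    (hsr : Subrectangular M) (hMne : M ≠ 0)
    (x y : k → ℝ) (hx : ∀ i, 0 ≤ x i) (hy : ∀ i, 0 ≤ y i)
    (hx1 : 0 < ∑ j, |Matrix.vecMul x (T * M) j|)
    (hy1 : 0 < ∑ j, |Matrix.vecMul y (T * M) j|) :
    projDist (Matrix.vecMul x (T * M)) (Matrix.vecMul y (T * M)) ≤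
      4 * Real.log ((1 + tau M) / (1 - tau M)) := by
  classical
  set a : m → ℝ := Matrix.vecMul x T with ha_def
  set b : m → ℝ := Matrix.vecMul y T with hb_def
  have ha : ∀ i, 0 ≤ a i := by
    intro i
    simp only [ha_def, Matrix.vecMul, dotProduct]
    exact Finset.sum_nonneg fun j _ => mul_nonneg (hx j) (hTpos j i)
  have hb : ∀ i, 0 ≤ b i := by
    intro i
    simp only [hb_def, Matrix.vecMul, dotProduct]
    exact Finset.sum_nonneg fun j _ => mul_nonneg (hy j) (hTpos j i)
  set U : n → ℝ := fun j => ∑ i, a i * M i j with hU_def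
  set V : n → ℝ := fun j => ∑ i, b i * M i j with hV_def
  have hUeq : Matrix.vecMul x (T * M) = U := by
    funext j
    rw [← Matrix.vecMul_vecMul]
    simp [hU_def, ha_def, Matrix.vecMul, dotProduct]
  have hVeq : Matrix.vecMul y (T * M) = V := by
    funext j
    rw [← Matrix.vecMul_vecMul]
    simp [hV_def, hb_def, Matrix.vecMul, dotProduct]
  rw [hUeq] at hx1 ⊢
  rw [hVeq] at hy1 ⊢
  have hU0 : ∀ j, 0 ≤ U j := fun j =>
    Finset.sum_nonneg fun i _ => mul_nonneg (ha i) (hMpos i j)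
  have hV0 : ∀ j, 0 ≤ V j := fun j =>
    Finset.sum_nonneg fun i _ => mul_nonneg (hb i) (hMpos i j)
  -- facts about φ
  set S : Set ℝ := {r : ℝ | ∃ i k j l,
    (∃ j', M i j' ≠ 0) ∧ (∃ j', M k j' ≠ 0) ∧ (∃ i', M i' j ≠ 0) ∧ (∃ i', M i' l ≠ 0) ∧
    r = (M i j * M k l) / (M i l * M k j)} with hS_def
  have hphiS : phi M = sInf S := rfl
  have hSfin : S.Finite := by
    apply Set.Finite.subset (Set.finite_range
      (fun p : m × m × n × n => (M p.1 p.2.2.1 * M p.2.1 p.2.2.2) / (M p.1 p.2.2.2 * M p.2.1 p.2.2.1)))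
    rintro r ⟨i, k', j, l, -, -, -, -, hr⟩
    exact ⟨(i, k', j, l), hr.symm⟩
  obtain ⟨i0, j0, hM0⟩ : ∃ i j, M i j ≠ 0 := by
    by_contra h
    push_neg at h
    exact hMne (Matrix.ext fun i j => h i j)
  have hone : (1 : ℝ) ∈ S := by
    refine ⟨i0, i0, j0, j0, ⟨j0, hM0⟩, ⟨j0, hM0⟩, ⟨i0, hM0⟩, ⟨i0, hM0⟩, ?_⟩
    rw [div_self (mul_ne_zero hM0 hM0)]
  have hSne : S.Nonempty := ⟨1, hone⟩
  have hSpos : ∀ r ∈ S, 0 < r := by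
    rintro r ⟨i, k', j, l, ⟨j1, h1⟩, ⟨j2, h2⟩, ⟨i1, h3⟩, ⟨i2, h4⟩, hr⟩
    have hij : M i j ≠ 0 := (hsr i j1 i1 j h1 h3).1
    have hkl : M k' l ≠ 0 := (hsr k' j2 i2 l h2 h4).1
    have hil : M i l ≠ 0 := (hsr i j1 i2 l h1 h4).1
    have hkj : M k' j ≠ 0 := (hsr k' j2 i1 j h2 h3).1
    have : ∀ p q, M p q ≠ 0 → 0 < M p q := fun p q h => (hMpos p q).lt_of_ne (Ne.symm h)
    rw [hr]
    exact div_pos (mul_pos (this _ _ hij) (this _ _ hkl)) (mul_pos (this _ _ hil) (this _ _ hkj))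
  have hφmem : phi M ∈ S := by rw [hphiS]; exact hSne.csInf_mem hSfin
  have hφpos : 0 < phi M := hSpos _ hφmem
  have hφ1 : phi M ≤ 1 := by rw [hphiS]; exact csInf_le hSfin.bddBelow hone
  have key : ∀ i k' j l, phi M * (M i j * M k' l) ≤ M i l * M k' j := by
    intro i k' j l
    by_cases h : M i j * M k' l = 0
    · rw [h, mul_zero]
      exact mul_nonneg (hMpos i l) (hMpos k' j)
    · have hij : M i j ≠ 0 := fun h' => h (by rw [h', zero_mul])
      have hkl : M k' l ≠ 0 := fun h' => h (by rw [h', mul_zero])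
      obtain ⟨hil, hkj⟩ := hsr i j k' l hij hkl
      have hmem : (M i l * M k' j) / (M i j * M k' l) ∈ S :=
        ⟨i, k', l, j, ⟨j, hij⟩, ⟨l, hkl⟩, ⟨k', hkl⟩, ⟨i, hij⟩, rfl⟩
      have hle : phi M ≤ (M i l * M k' j) / (M i j * M k' l) := by
        rw [hphiS]; exact csInf_le hSfin.bddBelow hmem
      have hijkl : 0 < M i j * M k' l :=
        (mul_nonneg (hMpos i j) (hMpos k' l)).lt_of_ne (Ne.symm h)
      calc phi M * (M i j * M k' l)
          ≤ (M i l * M k' j) / (M i j * M k' l) * (M i j * M k' l) :=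
            mul_le_mul_of_nonneg_right hle hijkl.le
        _ = M i l * M k' j := div_mul_cancel₀ _ (ne_of_gt hijkl)
  -- cross inequality
  have cross : ∀ j l, phi M * (U j * V l) ≤ U l * V j := by
    intro j l
    have expand : ∀ (j l : n), U j * V l = ∑ i, ∑ k', (a i * M i j) * (b k' * M k' l) := by
      intro j l
      rw [hU_def, hV_def]
      exact Finset.sum_mul_sum _ _ _ _
    rw [expand j l, expand l j, Finset.mul_sum]
    apply Finset.sum_le_sum
    intro i _
    rw [Finset.mul_sum]
    apply Finset.sum_le_sum
    intro k' _
    calc phi M * (a i * M i j * (b k' * M k' l))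
        = (a i * b k') * (phi M * (M i j * M k' l)) := by ring
      _ ≤ (a i * b k') * (M i l * M k' j) :=
          mul_le_mul_of_nonneg_left (key i k' j l) (mul_nonneg (ha i) (hb k'))
      _ = a i * M i l * (b k' * M k' j) := by ring
  -- supports
  have hUsupp : ∀ j, U j ≠ 0 → ∃ i, a i ≠ 0 ∧ M i j ≠ 0 := by
    intro j hj
    by_contra h
    push_neg at h
    apply hj
    rw [hU_def]
    apply Finset.sum_eq_zero
    intro i _
    rcases eq_or_ne (a i) 0 with h' | h'
    · rw [h', zero_mul]
    · rw [h i h', mul_zero]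
  have hVsupp : ∀ j, V j ≠ 0 → ∃ i, b i ≠ 0 ∧ M i j ≠ 0 := by
    intro j hj
    by_contra h
    push_neg at h
    apply hj
    rw [hV_def]
    apply Finset.sum_eq_zero
    intro i _
    rcases eq_or_ne (b i) 0 with h' | h'
    · rw [h', zero_mul]
    · rw [h i h', mul_zero]
  obtain ⟨jV, hjV⟩ : ∃ j, V j ≠ 0 := by
    by_contra h
    push_neg at h
    simp only [h, abs_zero, Finset.sum_const_zero, lt_self_iff_false] at hy1
  obtain ⟨iV, hbV, hMV⟩ := hVsupp jV hjV
  have hVpos : ∀ j, (∃ i', M i' j ≠ 0) → 0 < V j := by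
    rintro j ⟨i', hi'⟩
    have hMiVj : M iV j ≠ 0 := (hsr iV jV i' j hMV hi').1
    have : 0 < b iV * M iV j :=
      mul_pos ((hb iV).lt_of_ne (Ne.symm hbV)) ((hMpos iV j).lt_of_ne (Ne.symm hMiVj))
    calc (0:ℝ) < b iV * M iV j := this
      _ ≤ V j := Finset.single_le_sum (fun i _ => mul_nonneg (hb i) (hMpos i j))
          (Finset.mem_univ iV)
  -- bound elements of the projDist set
  set D : Set ℝ := {r : ℝ | ∃ j, U j ≠ 0 ∧ ∃ l, U l ≠ 0 ∧ r = (U j / V j) / (U l / V l)}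
    with hD_def
  have hDbound : ∀ r ∈ D, r ≤ 1 / phi M := by
    rintro r ⟨j, hj, l, hl, hr⟩
    obtain ⟨ij, haj, hMj⟩ := hUsupp j hj
    obtain ⟨il, hal, hMl⟩ := hUsupp l hl
    have hVj : 0 < V j := hVpos j ⟨ij, hMj⟩
    have hVl : 0 < V l := hVpos l ⟨il, hMl⟩
    have hUj : 0 < U j := (hU0 j).lt_of_ne (Ne.symm hj)
    have hUl : 0 < U l := (hU0 l).lt_of_ne (Ne.symm hl)
    have h1 : r = (U j * V l) / (U l * V j) := by
      rw [hr]; field_simp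
    rw [h1, div_le_div_iff₀ (mul_pos hUl hVj) hφpos]
    have := cross j l
    nlinarith [this]
  have hDne : (1:ℝ) ∈ D := by
    obtain ⟨jU, hjU⟩ : ∃ j, U j ≠ 0 := by
      by_contra h
      push_neg at h
      simp only [h, abs_zero, Finset.sum_const_zero, lt_self_iff_false] at hx1
    obtain ⟨iU, -, hMU⟩ := hUsupp jU hjU
    exact ⟨jU, hjU, jU, hjU, by rw [div_self (div_ne_zero hjU (ne_of_gt (hVpos jU ⟨iU, hMU⟩)))]⟩
  have hDbdd : BddAbove D := ⟨1 / phi M, hDbound⟩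
  have hsup_le : sSup D ≤ 1 / phi M := csSup_le ⟨1, hDne⟩ hDbound
  have hsup_pos : (0:ℝ) < sSup D := lt_of_lt_of_le one_pos (le_csSup hDbdd hDne)
  have hproj : projDist U V = Real.log (sSup D) := rfl
  rw [hproj]
  -- compute the RHS
  set s := Real.sqrt (phi M) with hs_def
  have hs_pos : 0 < s := Real.sqrt_pos.mpr hφpos
  have hs1 : s ≤ 1 := by
    rw [hs_def, show (1:ℝ) = Real.sqrt 1 from (Real.sqrt_one).symm]
    exact Real.sqrt_le_sqrt hφ1
  have h1s : (0:ℝ) < 1 + s := by linarith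
  have htau : tau M = (1 - s) / (1 + s) := rfl
  have hfrac : (1 + tau M) / (1 - tau M) = 1 / s := by
    rw [htau]
    have h2 : 1 - (1 - s) / (1 + s) = 2 * s / (1 + s) := by
      field_simp; ring
    have h3 : 1 + (1 - s) / (1 + s) = 2 / (1 + s) := by
      field_simp
      ring
    rw [h2, h3]
    field_simp
  rw [hfrac]
  have hlogs : Real.log (1 / s) = -(1/2) * Real.log (phi M) := by
    rw [one_div, Real.log_inv, hs_def, Real.log_sqrt hφpos.le]
    ring
  have hlogφ : Real.log (phi M) ≤ 0 := Real.log_nonpos hφpos.le hφ1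
  have hlhs : Real.log (sSup D) ≤ Real.log (1 / phi M) :=
    Real.log_le_log hsup_pos hsup_le
  rw [hlogs]
  have heq : Real.log (1 / phi M) = -Real.log (phi M) := by
    rw [one_div, Real.log_inv]
  rw [heq] at hlhs
  linarith
end
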